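/- arXiv:2403.11712 — 5 statements merged into one kernel-verified Lean document; each statement's English description precedes it below -/
import Mathlib

section
/- Let E be a complex Banach space, O ⊆ ℂᵈ open, N ⊆ E' a norming subset of the dual, and f : O → E locally bounded such that for every x' ∈ N the scalar function z ↦ x'(f(z)) is holomorphic in each coordinate separately. Then f is continuous. -/
open Metric Function Finset

/-- One-variable Cauchy/Lipschitz estimate: a holomorphic function bounded by `C` on
`ball c R` is Lipschitz with constant `C / (R/4)` on `ball c (R/2)`. -/
lemma oneVar_lipschitz {g : ℂ → ℂ} {c : ℂ} {R C : ℝ} (hR : 0 < R)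
    (hd : ∀ u ∈ ball c R, DifferentiableAt ℂ g u)
    (hb : ∀ u ∈ ball c R, ‖g u‖ ≤ C)
    {x y : ℂ} (hx : x ∈ ball c (R/2)) (hy : y ∈ ball c (R/2)) :
    ‖g x - g y‖ ≤ (C / (R/4)) * ‖x - y‖ := by
  have hball : IsOpen (ball c R) := isOpen_ball
  have hdo : DifferentiableOn ℂ g (ball c R) := fun u hu => (hd u hu).differentiableWithinAt
  -- derivative bound on ball c (R/2)
  have hderiv : ∀ u ∈ ball c (R/2), ‖deriv g u‖ ≤ C / (R/4) := by
    intro u hu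
    have hsub : closedBall u (R/4) ⊆ ball c R := by
      intro v hv
      have h1 : dist v u ≤ R/4 := mem_closedBall.mp hv
      have h2 : dist u c < R/2 := mem_ball.mp hu
      have : dist v c < R := lt_of_le_of_lt (dist_triangle v u c) (by linarith)
      exact mem_ball.mpr this
    have hsub' : ball u (R/4) ⊆ ball c R := (ball_subset_closedBall).trans hsub
    have hdccl : DiffContOnCl ℂ g (ball u (R/4)) := by
      refine ⟨hdo.mono hsub', ?_⟩
      have : closure (ball u (R/4)) ⊆ closedBall u (R/4) := closure_ball_subset_closedBall
      exact (hdo.continuousOn).mono (this.trans hsub)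
    have := Complex.norm_deriv_le_of_forall_mem_sphere_norm_le (by linarith : (0:ℝ) < R/4)
      hdccl (fun z hz => hb z (hsub (sphere_subset_closedBall hz)))
    exact this
  -- mean value inequality on the convex ball c (R/2)
  have hconv : Convex ℝ (ball c (R/2)) := convex_ball c (R/2)
  have hder : ∀ u ∈ ball c (R/2), HasDerivWithinAt g (deriv g u) (ball c (R/2)) u := by
    intro u hu
    have hu' : u ∈ ball c R := by
      have : dist u c < R/2 := mem_ball.mp hu
      exact mem_ball.mpr (by linarith)
    exact ((hd u hu').hasDerivAt).hasDerivWithinAt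
  have := hconv.norm_image_sub_le_of_norm_hasDerivWithin_le hder hderiv hy hx
  simpa using this

/-- Multivariable Lipschitz-type estimate for separately holomorphic bounded functions. -/
lemma multiVar_estimate {d : ℕ} {g : (Fin d → ℂ) → ℂ} {a : Fin d → ℂ} {r C : ℝ}
    (hr : 0 < r)
    (hb : ∀ z ∈ ball a r, ‖g z‖ ≤ C)
    (hsep : ∀ (j : Fin d), ∀ v ∈ ball a r,
      DifferentiableAt ℂ (fun w : ℂ => g (Function.update v j w)) (v j)) :
    ∀ z ∈ ball a (r/4), ∀ w ∈ ball a (r/4),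
      ‖g z - g w‖ ≤ (C / (r/8)) * ∑ j, ‖z j - w j‖ := by
  set K := C / (r/8) with hK
  -- membership in the sup-norm ball via coordinates
  have coord_mem : ∀ {v : Fin d → ℂ} {ρ : ℝ}, 0 < ρ → (∀ j, dist (v j) (a j) < ρ) →
      v ∈ ball a ρ := by
    intro v ρ hρ h
    exact mem_ball.mpr ((dist_pi_lt_iff hρ).mpr h)
  have mem_coord : ∀ {v : Fin d → ℂ} {ρ : ℝ}, v ∈ ball a ρ → ∀ j, dist (v j) (a j) < ρ := by
    intro v ρ hv j
    exact lt_of_le_of_lt (dist_le_pi_dist v a j) (mem_ball.mp hv)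
  -- one-coordinate Lipschitz step
  have onestep : ∀ (j : Fin d), ∀ v ∈ ball a (r/4), ∀ u : ℂ, dist u (a j) < r/4 →
      ‖g v - g (Function.update v j u)‖ ≤ K * ‖v j - u‖ := by
    intro j v hv u hu
    set h : ℂ → ℂ := fun w => g (Function.update v j w) with hh
    have hmem : ∀ w ∈ ball (a j) (r/2), Function.update v j w ∈ ball a r := by
      intro w hw
      refine coord_mem (by linarith) (fun k => ?_)
      rcases eq_or_ne k j with rfl | hk
      · simpa using lt_of_lt_of_le (mem_ball.mp hw) (by linarith)
      · rw [Function.update_of_ne hk]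
        exact lt_of_lt_of_le (mem_coord hv k) (by linarith)
    have hd : ∀ w ∈ ball (a j) (r/2), DifferentiableAt ℂ h w := by
      intro w hw
      have h1 := hsep j (Function.update v j w) (hmem w hw)
      have e1 : (fun w' : ℂ => g (Function.update (Function.update v j w) j w')) = h := by
        funext w'
        simp [hh, Function.update_idem]
      have e2 : Function.update v j w j = w := Function.update_self j w v
      rw [e1, e2] at h1
      exact h1
    have hbd : ∀ w ∈ ball (a j) (r/2), ‖h w‖ ≤ C := fun w hw => hb _ (hmem w hw)
    have hvj : v j ∈ ball (a j) ((r/2)/2) := by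
      have := mem_coord hv j
      exact mem_ball.mpr (by linarith)
    have huj : u ∈ ball (a j) ((r/2)/2) := mem_ball.mpr (by linarith)
    have := oneVar_lipschitz (by linarith : (0:ℝ) < r/2) hd hbd hvj huj
    have e3 : h (v j) = g v := by simp [hh]
    have e4 : C / (r/2/4) = K := by rw [hK]; ring_nf
    rw [e3, e4] at this
    simpa [hh] using this
  -- telescoping over a finset of coordinates
  have key : ∀ s : Finset (Fin d), ∀ z ∈ ball a (r/4), ∀ w ∈ ball a (r/4),
      (∀ j, j ∉ s → z j = w j) → ‖g z - g w‖ ≤ K * ∑ j ∈ s, ‖z j - w j‖ := by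
    intro s
    induction s using Finset.induction_on with
    | empty =>
      intro z _ w _ hzw
      have : z = w := funext fun j => hzw j (Finset.notMem_empty j)
      simp [this]
    | @insert j s hj ih =>
      intro z hz w hw hzw
      set w' := Function.update z j (w j) with hw'
      have hw'mem : w' ∈ ball a (r/4) := by
        refine coord_mem (by linarith) (fun k => ?_)
        rcases eq_or_ne k j with rfl | hk
        · simpa [hw'] using mem_coord hw k
        · rw [hw', Function.update_of_ne hk]; exact mem_coord hz k
      have step1 : ‖g z - g w'‖ ≤ K * ‖z j - w j‖ :=
        onestep j z hz (w j) (mem_coord hw j)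
      have hagree : ∀ k, k ∉ s → w' k = w k := by
        intro k hk
        rcases eq_or_ne k j with rfl | hne
        · simp [hw']
        · rw [hw', Function.update_of_ne hne]
          exact hzw k (by simp [hne, hk])
      have step2 : ‖g w' - g w‖ ≤ K * ∑ k ∈ s, ‖w' k - w k‖ := ih w' hw'mem w hw hagree
      have hsum : ∑ k ∈ s, ‖w' k - w k‖ = ∑ k ∈ s, ‖z k - w k‖ := by
        refine Finset.sum_congr rfl (fun k hk => ?_)
        have : k ≠ j := fun h => hj (h ▸ hk)
        rw [hw', Function.update_of_ne this]
      calc ‖g z - g w‖ ≤ ‖g z - g w'‖ + ‖g w' - g w‖ := norm_sub_le_norm_sub_add_norm_sub _ _ _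
        _ ≤ K * ‖z j - w j‖ + K * ∑ k ∈ s, ‖z k - w k‖ := by
            rw [hsum] at step2; exact add_le_add step1 step2
        _ = K * ∑ k ∈ insert j s, ‖z k - w k‖ := by rw [Finset.sum_insert hj]; ring
  intro z hz w hw
  exact key Finset.univ z hz w hw (fun j hj => absurd (Finset.mem_univ j) hj)

/-- **(Grothendieck-type continuity.)** Let `E` be a complex Banach space, `O ⊆ ℂᵈ` open,
`N` a norming subset of the dual `E'`, and `f : O → E` locally bounded such that
`z ↦ x'(f z)` is separately holomorphic for every `x' ∈ N`. Then `f` is continuous on `O`. -/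
theorem continuousOn_of_locallyBounded_of_norming_sep_holo
    {E : Type*} [NormedAddCommGroup E] [NormedSpace ℂ E] [CompleteSpace E]
    {d : ℕ} (O : Set (Fin d → ℂ)) (hO : IsOpen O)
    (N : Set (E →L[ℂ] ℂ))
    (hN : ∀ x : E, ‖x‖ = sSup ((fun x' : E →L[ℂ] ℂ => ‖x' x‖) '' {x' ∈ N | ‖x'‖ ≤ 1}))
    (f : (Fin d → ℂ) → E)
    (hloc : ∀ a ∈ O, ∃ U ∈ nhds a, ∃ C : ℝ, ∀ z ∈ U ∩ O, ‖f z‖ ≤ C)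
    (hsep : ∀ x' ∈ N, ∀ j : Fin d, ∀ z ∈ O,
      DifferentiableAt ℂ (fun w : ℂ => x' (f (Function.update z j w))) (z j)) :
    ContinuousOn f O := by
  intro a ha
  obtain ⟨U, hU, C₀, hC₀⟩ := hloc a ha
  set B := max C₀ 0 with hB
  have hB0 : 0 ≤ B := le_max_right _ _
  have hUO : U ∩ O ∈ nhds a := Filter.inter_mem hU (hO.mem_nhds ha)
  obtain ⟨r, hr, hball⟩ := Metric.mem_nhds_iff.mp hUO
  have hfb : ∀ z ∈ ball a r, ‖f z‖ ≤ B :=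
    fun z hz => le_trans (hC₀ z (hball hz)) (le_max_left _ _)
  set K := B / (r/8) with hK
  have hK0 : 0 ≤ K := div_nonneg hB0 (by linarith)
  -- key estimate: for z in O near a, ‖f z - f a‖ ≤ K * d * dist z a
  have hest : ∀ z ∈ ball a (r/4), ‖f z - f a‖ ≤ K * (d * dist z a) := by
    intro z hz
    have ha4 : a ∈ ball a (r/4) := mem_ball_self (by linarith)
    rw [hN (f z - f a)]
    apply Real.sSup_le
    · rintro y ⟨x', ⟨hx'N, hx'1⟩, rfl⟩
      have hg : ∀ u ∈ ball a r, ‖x' (f u)‖ ≤ B := by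
        intro u hu
        calc ‖x' (f u)‖ ≤ ‖x'‖ * ‖f u‖ := x'.le_opNorm _
          _ ≤ 1 * B := mul_le_mul hx'1 (hfb u hu) (norm_nonneg _) zero_le_one
          _ = B := one_mul B
      have hgsep : ∀ (j : Fin d), ∀ v ∈ ball a r,
          DifferentiableAt ℂ (fun w : ℂ => x' (f (Function.update v j w))) (v j) := by
        intro j v hv
        exact hsep x' hx'N j v ((hball hv).2)
      have hmain := multiVar_estimate hr hg hgsep z hz a ha4
      have e1 : ‖x' (f z - f a)‖ = ‖x' (f z) - x' (f a)‖ := by rw [map_sub]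
      have e2 : ∑ j, ‖z j - a j‖ ≤ d * dist z a := by
        calc ∑ j, ‖z j - a j‖ ≤ ∑ _j : Fin d, dist z a := by
              refine Finset.sum_le_sum (fun j _ => ?_)
              rw [← dist_eq_norm]
              exact dist_le_pi_dist z a j
          _ = d * dist z a := by simp [mul_comm]
      calc ‖x' (f z - f a)‖ = ‖x' (f z) - x' (f a)‖ := e1
        _ ≤ K * ∑ j, ‖z j - a j‖ := hmain
        _ ≤ K * (d * dist z a) := mul_le_mul_of_nonneg_left e2 hK0
    · positivity
  -- conclude continuity
  rw [Metric.continuousWithinAt_iff]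
  intro ε hε
  refine ⟨min (r/4) (ε / (K * d + 1)), lt_min (by linarith) (by positivity), ?_⟩
  intro z _ hzd
  have hz4 : z ∈ ball a (r/4) := mem_ball.mpr (lt_of_lt_of_le hzd (min_le_left _ _))
  have hzε : dist z a < ε / (K * d + 1) := lt_of_lt_of_le hzd (min_le_right _ _)
  have h1 : dist (f z) (f a) ≤ K * (d * dist z a) := by
    rw [dist_eq_norm]; exact hest z hz4
  have hd0 : (0:ℝ) ≤ dist z a := dist_nonneg
  have hKd : (0:ℝ) ≤ K * d := by positivity
  have h2 : K * (d * dist z a) < ε := by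
    have h3 : (K * d + 1) * dist z a < ε := by
      have h4 := (lt_div_iff₀ (show (0:ℝ) < K * d + 1 by positivity)).mp hzε
      nlinarith
    nlinarith
  linarith
end

section
/- Let E be a complex Banach space, O ⊆ ℂᵈ open, N ⊆ E' a norming subset of the dual, and f : O → E locally bounded such that for every x' ∈ N the function z ↦ x'(f(z)) is separately holomorphic. Then f is holomorphic (Fréchet complex differentiable) on O. -/
open Metric Set Function Finset

/-- Max-principle bound on `dslope` of a bounded holomorphic function on a disc. -/
lemma aux_dslope_bound {F : ℂ → ℂ} {c : ℂ} {R B : ℝ} (hR : 0 < R)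
    (hd : DifferentiableOn ℂ F (ball c R))
    (hB : ∀ z ∈ ball c R, ‖F z‖ ≤ B) :
    ∀ z ∈ ball c R, ‖dslope F c z‖ ≤ 4 * B / R := by
  intro z hz
  have hB0 : 0 ≤ B := le_trans (norm_nonneg _) (hB c (mem_ball_self hR))
  have hz' : dist z c < R := mem_ball.1 hz
  set ρ : ℝ := (max (dist z c) (R / 2) + R) / 2 with hρdef
  have hmax : max (dist z c) (R / 2) < R := max_lt hz' (by linarith)
  have hρR : ρ < R := by rw [hρdef]; linarith
  have hρhalf : R / 2 ≤ ρ := by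
    have h1 : R / 2 ≤ max (dist z c) (R / 2) := le_max_right _ _
    rw [hρdef]; linarith
  have hρz : dist z c < ρ := by
    have h1 : dist z c ≤ max (dist z c) (R / 2) := le_max_left _ _
    rw [hρdef]; linarith
  have hρ0 : 0 < ρ := lt_of_lt_of_le (by linarith) hρhalf
  have hdd : DifferentiableOn ℂ (dslope F c) (ball c R) :=
    (Complex.differentiableOn_dslope (isOpen_ball.mem_nhds (mem_ball_self hR))).2 hd
  have hcl : DiffContOnCl ℂ (dslope F c) (ball c ρ) := by
    apply DifferentiableOn.diffContOnCl
    rw [closure_ball c hρ0.ne']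
    exact hdd.mono (closedBall_subset_ball hρR)
  have hfront : ∀ w ∈ frontier (ball c ρ), ‖dslope F c w‖ ≤ 4 * B / R := by
    intro w hw
    rw [frontier_ball c hρ0.ne'] at hw
    have hwc : dist w c = ρ := mem_sphere.1 hw
    have hwne : w ≠ c := by
      intro hcon; rw [hcon, dist_self] at hwc; exact hρ0.ne hwc
    have hwball : w ∈ ball c R := by rw [mem_ball, hwc]; exact hρR
    rw [dslope_of_ne _ hwne, slope_def_field]
    have h1 : ‖w - c‖ = ρ := by rwa [← dist_eq_norm]
    have h2 : ‖F w - F c‖ ≤ 2 * B := by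
      have := hB w hwball; have := hB c (mem_ball_self hR)
      calc ‖F w - F c‖ ≤ ‖F w‖ + ‖F c‖ := norm_sub_le _ _
        _ ≤ 2 * B := by linarith
    rw [div_eq_mul_inv, norm_mul, norm_inv, h1]
    calc ‖F w - F c‖ * ρ⁻¹ ≤ (2 * B) * ρ⁻¹ :=
          mul_le_mul_of_nonneg_right h2 (inv_nonneg.2 hρ0.le)
      _ ≤ (2 * B) * (R / 2)⁻¹ := by
          apply mul_le_mul_of_nonneg_left _ (by linarith)
          exact inv_anti₀ (by linarith) hρhalf
      _ = 4 * B / R := by field_simp; ring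
  exact Complex.norm_le_of_forall_mem_frontier_norm_le isBounded_ball hcl hfront
    (subset_closure (mem_ball.2 hρz))

lemma aux_lip {ψ : ℂ → ℂ} {c : ℂ} {R C : ℝ} (hR : 0 < R)
    (hd : DifferentiableOn ℂ ψ (ball c R)) (hC : ∀ z ∈ ball c R, ‖ψ z‖ ≤ C)
    {z : ℂ} (hz : z ∈ ball c R) : ‖ψ z - ψ c‖ ≤ 4 * C / R * ‖z - c‖ := by
  have hC0 : 0 ≤ C := le_trans (norm_nonneg _) (hC c (mem_ball_self hR))
  have h := aux_dslope_bound hR hd hC z hz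
  have e : ψ z - ψ c = (z - c) • dslope ψ c z := (sub_smul_dslope ψ c z).symm
  rw [e, norm_smul]
  calc ‖z - c‖ * ‖dslope ψ c z‖ ≤ ‖z - c‖ * (4 * C / R) :=
        mul_le_mul_of_nonneg_left h (norm_nonneg _)
    _ = 4 * C / R * ‖z - c‖ := mul_comm _ _

lemma aux_taylor2 {ψ : ℂ → ℂ} {c : ℂ} {R C : ℝ} (hR : 0 < R)
    (hd : DifferentiableOn ℂ ψ (ball c R)) (hC : ∀ z ∈ ball c R, ‖ψ z‖ ≤ C)
    {z : ℂ} (hz : z ∈ ball c R) :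
    ‖ψ z - ψ c - (z - c) * deriv ψ c‖ ≤ 16 * C / R ^ 2 * ‖z - c‖ ^ 2 := by
  have hC0 : 0 ≤ C := le_trans (norm_nonneg _) (hC c (mem_ball_self hR))
  have hdd : DifferentiableOn ℂ (dslope ψ c) (ball c R) :=
    (Complex.differentiableOn_dslope (isOpen_ball.mem_nhds (mem_ball_self hR))).2 hd
  have h1 : ∀ w ∈ ball c R, ‖dslope ψ c w‖ ≤ 4 * C / R := aux_dslope_bound hR hd hC
  have h2 := aux_dslope_bound hR hdd h1 z hz
  have e1 : (z - c) * dslope (dslope ψ c) c z = dslope ψ c z - deriv ψ c := by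
    have := sub_smul_dslope (dslope ψ c) c z
    rwa [dslope_same, smul_eq_mul] at this
  have e2 : (z - c) * dslope ψ c z = ψ z - ψ c := by
    have := sub_smul_dslope ψ c z
    rwa [smul_eq_mul] at this
  have key : ψ z - ψ c - (z - c) * deriv ψ c = (z - c) * ((z - c) * dslope (dslope ψ c) c z) := by
    rw [e1, mul_sub, e2]
  rw [key, norm_mul, norm_mul]
  calc ‖z - c‖ * (‖z - c‖ * ‖dslope (dslope ψ c) c z‖)
      ≤ ‖z - c‖ * (‖z - c‖ * (4 * (4 * C / R) / R)) := by
        apply mul_le_mul_of_nonneg_left _ (norm_nonneg _)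
        exact mul_le_mul_of_nonneg_left h2 (norm_nonneg _)
    _ = 16 * C / R ^ 2 * ‖z - c‖ ^ 2 := by field_simp; ring

lemma aux_norming {E : Type*} [NormedAddCommGroup E] [NormedSpace ℂ E]
    {N : Set (E →L[ℂ] ℂ)}
    (hN : ∀ x : E, ‖x‖ = sSup ((fun x' : E →L[ℂ] ℂ => ‖x' x‖) '' {x' ∈ N | ‖x'‖ ≤ 1}))
    {x : E} {b : ℝ} (hb : 0 ≤ b)
    (h : ∀ x' ∈ N, ‖x'‖ ≤ 1 → ‖x' x‖ ≤ b) : ‖x‖ ≤ b := by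
  rw [hN x]
  apply Real.sSup_le _ hb
  rintro y ⟨x', ⟨h1, h2⟩, rfl⟩
  exact h x' h1 h2

lemma aux_clm_circleIntegral {E : Type*} [NormedAddCommGroup E] [NormedSpace ℂ E] [CompleteSpace E]
    (L : E →L[ℂ] ℂ) {F : ℂ → E} {c : ℂ} {R : ℝ} (hF : CircleIntegrable F c R) :
    L (∮ z in C(c, R), F z) = ∮ z in C(c, R), L (F z) := by
  rw [circleIntegral, circleIntegral, ← L.intervalIntegral_comp_comm hF.out]
  congr 1
  funext θ
  rw [L.map_smul]

lemma aux_update_mem {d : ℕ} {a p : Fin d → ℂ} {j : Fin d} {w : ℂ} {s t : ℝ}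
    (hp : p ∈ closedBall a s) (hw : dist w (a j) ≤ t) (hst : s ≤ t) (ht : 0 ≤ t) :
    Function.update p j w ∈ closedBall a t := by
  rw [mem_closedBall, dist_pi_le_iff ht]
  intro k
  rcases eq_or_ne k j with rfl | hk
  · simpa using hw
  · rw [Function.update_of_ne hk]
    exact le_trans (dist_le_pi_dist p a k) (le_trans (mem_closedBall.1 hp) hst)

set_option maxHeartbeats 2000000 in
/-- **(Grothendieck-type continuity.)** Let `E` be a complex Banach space, `O ⊆ ℂᵈ` open,
`N` a norming subset of the dual `E'`, and `f : O → E` locally bounded such that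
`z ↦ x'(f z)` is separately holomorphic for every `x' ∈ N`. Then `f` is holomorphic (Fréchet ℂ-differentiable) on `O`. -/
theorem differentiableOn_of_locallyBounded_of_norming_sep_holo
    {E : Type*} [NormedAddCommGroup E] [NormedSpace ℂ E] [CompleteSpace E]
    {d : ℕ} (O : Set (Fin d → ℂ)) (hO : IsOpen O)
    (N : Set (E →L[ℂ] ℂ))
    (hN : ∀ x : E, ‖x‖ = sSup ((fun x' : E →L[ℂ] ℂ => ‖x' x‖) '' {x' ∈ N | ‖x'‖ ≤ 1}))
    (f : (Fin d → ℂ) → E)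
    (hloc : ∀ a ∈ O, ∃ U ∈ nhds a, ∃ C : ℝ, ∀ z ∈ U ∩ O, ‖f z‖ ≤ C)
    (hsep : ∀ x' ∈ N, ∀ j : Fin d, ∀ z ∈ O,
      DifferentiableAt ℂ (fun w : ℂ => x' (f (Function.update z j w))) (z j)) :
    DifferentiableOn ℂ f O := by
  intro a ha
  obtain ⟨U, hU, C, hC⟩ := hloc a ha
  obtain ⟨r, hr0, hrsub⟩ : ∃ r > 0, closedBall a r ⊆ U ∩ O := by
    have hUO : U ∩ O ∈ nhds a := Filter.inter_mem hU (hO.mem_nhds ha)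
    rcases Metric.mem_nhds_iff.1 hUO with ⟨ε, hε, hsub⟩
    exact ⟨ε / 2, half_pos hε, (closedBall_subset_ball (half_lt_self hε)).trans hsub⟩
  have hmemO : closedBall a r ⊆ O := fun z hz => (hrsub hz).2
  have hfb : ∀ z ∈ closedBall a r, ‖f z‖ ≤ C := fun z hz => hC z (hrsub hz)
  have hC0 : 0 ≤ C := le_trans (norm_nonneg _) (hfb a (mem_closedBall_self hr0.le))
  -- updates of points in the half-polydisc stay in the polydisc
  have hupdate : ∀ p ∈ closedBall a (r / 2), ∀ (j : Fin d), ∀ w ∈ ball (p j) (r / 2),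
      Function.update p j w ∈ closedBall a r := by
    intro p hp j w hw
    have h1 : dist (p j) (a j) ≤ r / 2 := le_trans (dist_le_pi_dist p a j) (mem_closedBall.1 hp)
    have h2 : dist w (a j) ≤ r :=
      le_trans (dist_triangle w (p j) (a j)) (by have := mem_ball.1 hw; linarith)
    exact aux_update_mem hp h2 (by linarith) hr0.le
  -- slices of x' ∘ f are holomorphic
  have hsd : ∀ x' ∈ N, ∀ (j : Fin d), ∀ p ∈ closedBall a (r / 2),
      DifferentiableOn ℂ (fun w => x' (f (Function.update p j w))) (ball (p j) (r / 2)) := by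
    intro x' hx' j p hp w hw
    have hmem : Function.update p j w ∈ O := hmemO (hupdate p hp j w hw)
    have h := hsep x' hx' j (Function.update p j w) hmem
    simp only [Function.update_idem, Function.update_self] at h
    exact h.differentiableWithinAt
  -- slices of x' ∘ f are bounded by C
  have hsb : ∀ x' : E →L[ℂ] ℂ, ‖x'‖ ≤ 1 → ∀ (j : Fin d), ∀ p ∈ closedBall a (r / 2),
      ∀ w ∈ ball (p j) (r / 2), ‖x' (f (Function.update p j w))‖ ≤ C := by
    intro x' hx' j p hp w hw
    calc ‖x' (f (Function.update p j w))‖ ≤ ‖x'‖ * ‖f (Function.update p j w)‖ :=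
          x'.le_opNorm _
      _ ≤ 1 * C := mul_le_mul hx' (hfb _ (hupdate p hp j w hw)) (norm_nonneg _) zero_le_one
      _ = C := one_mul C
  have hr2 : (0:ℝ) < r / 2 := by linarith
  have hdivC : 4 * C / (r / 2) = 8 * C / r := by field_simp; ring
  -- vector-valued Lipschitz estimate along slices
  have hvl : ∀ p ∈ closedBall a (r / 2), ∀ (j : Fin d), ∀ w ∈ ball (p j) (r / 2),
      ‖f (Function.update p j w) - f p‖ ≤ 8 * C / r * dist w (p j) := by
    intro p hp j w hw
    have hb : (0:ℝ) ≤ 8 * C / r * dist w (p j) := by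
      apply mul_nonneg (div_nonneg (by linarith) hr0.le) dist_nonneg
    apply aux_norming hN hb
    intro x' hx'N hx'1
    have h := aux_lip hr2 (hsd x' hx'N j p hp) (hsb x' hx'1 j p hp) hw
    rw [Function.update_eq_self j p] at h
    rw [← x'.map_sub] at h
    rw [dist_eq_norm]
    rwa [hdivC] at h
  -- continuity of f along small circles in each variable
  have hcont : ∀ p ∈ closedBall a (r / 8), ∀ (j : Fin d),
      ContinuousOn (fun ζ => f (Function.update p j ζ)) (sphere (a j) (r / 8)) := by
    intro p hp j
    have hK : (0:ℝ) ≤ 8 * C / r := div_nonneg (by linarith) hr0.le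
    apply (LipschitzOnWith.of_dist_le_mul (K := ⟨8 * C / r, hK⟩) ?_).continuousOn
    intro ζ hζ ζ' hζ'
    have hζa : dist ζ (a j) = r / 8 := mem_sphere.1 hζ
    have hζ'a : dist ζ' (a j) = r / 8 := mem_sphere.1 hζ'
    set q := Function.update p j ζ' with hq
    have hq2 : q ∈ closedBall a (r / 2) :=
      aux_update_mem (s := r / 8) (t := r / 2) hp
        (by rw [hζ'a]; linarith) (by linarith) (by linarith)
    have hqj : q j = ζ' := Function.update_self j ζ' p
    have hζball : ζ ∈ ball (q j) (r / 2) := by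
      rw [mem_ball, hqj]
      calc dist ζ ζ' ≤ dist ζ (a j) + dist (a j) ζ' := dist_triangle _ _ _
        _ = r / 8 + r / 8 := by rw [hζa, dist_comm, hζ'a]
        _ < r / 2 := by linarith
    have h := hvl q hq2 j ζ hζball
    rw [hq, Function.update_idem] at h
    simp only [Function.update_self] at h
    rw [dist_eq_norm, dist_eq_norm, hq]
    rw [dist_eq_norm] at h; exact h
  -- circle integrability of the vector Cauchy kernels
  have hr8 : (0:ℝ) < r / 8 := by linarith
  have hvInt : ∀ j : Fin d, CircleIntegrable
      (fun ζ => (ζ - a j) ^ (-2 : ℤ) • f (Function.update a j ζ)) (a j) (r / 8) := by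
    intro j
    apply ContinuousOn.circleIntegrable hr8.le
    apply ContinuousOn.smul
    · apply (continuousOn_id.sub continuousOn_const).zpow₀
      intro ζ hζ
      left
      simp only [Pi.sub_apply, id_eq]
      rw [sub_ne_zero]
      rintro rfl
      have := mem_sphere.1 hζ
      rw [dist_self] at this
      exact hr8.ne' this.symm
    · exact hcont a (mem_closedBall_self hr8.le) j
  -- the candidate partial derivatives
  set v : Fin d → E := fun j =>
    (2 * Real.pi * Complex.I : ℂ)⁻¹ •
      ∮ ζ in C(a j, r / 8), (ζ - a j) ^ (-2 : ℤ) • f (Function.update a j ζ) with hv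
  -- Cauchy representation for the scalar slice derivatives at the centre
  have hrep : ∀ x' ∈ N, ∀ (j : Fin d), ∀ p ∈ closedBall a (r / 2), p j = a j →
      deriv (fun w => x' (f (Function.update p j w))) (a j)
        = (2 * Real.pi * Complex.I : ℂ)⁻¹ •
            ∮ ζ in C(a j, r / 8), (ζ - a j) ^ (-2 : ℤ) • x' (f (Function.update p j ζ)) := by
    intro x' hx' j p hp hpj
    have hdOn : DifferentiableOn ℂ (fun w => x' (f (Function.update p j w)))
        (ball (a j) (r / 2)) := by
      have := hsd x' hx' j p hp
      rwa [hpj] at this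
    have hdiff : DiffContOnCl ℂ (fun w => x' (f (Function.update p j w)))
        (ball (a j) (r / 8)) :=
      hdOn.diffContOnCl_ball (closedBall_subset_ball (by linarith))
    have hc := hdiff.deriv_eq_smul_circleIntegral hr8
    have e : (∮ ζ in C(a j, r / 8), (ζ - a j) ^ (-2 : ℤ) • x' (f (Function.update p j ζ)))
        = ∮ ζ in C(a j, r / 8), (1 / (ζ - a j) ^ 2) • x' (f (Function.update p j ζ)) := by
      congr 1; funext ζ; simp [zpow_neg]
    have hne : (2 * Real.pi * Complex.I : ℂ) ≠ 0 := by simp [Real.pi_ne_zero, Complex.I_ne_zero]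
    rw [e, hc, inv_smul_smul₀ hne]
  -- x' (v j) is the slice derivative of x' ∘ f at a
  have hx'v : ∀ x' ∈ N, ∀ j : Fin d,
      x' (v j) = deriv (fun w => x' (f (Function.update a j w))) (a j) := by
    intro x' hx' j
    rw [hrep x' hx' j a (mem_closedBall_self hr2.le) rfl]
    rw [hv]
    simp only
    rw [x'.map_smul, aux_clm_circleIntegral x' (hvInt j)]
    congr 1
    apply circleIntegral.integral_congr hr8.le
    intro ζ hζ
    simp [x'.map_smul]
  -- scalar circle integrability of slices
  have hsInt : ∀ x' : E →L[ℂ] ℂ, ∀ p ∈ closedBall a (r / 8), ∀ j : Fin d,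
      CircleIntegrable (fun ζ => (ζ - a j) ^ (-2 : ℤ) • x' (f (Function.update p j ζ)))
        (a j) (r / 8) := by
    intro x' p hp j
    apply ContinuousOn.circleIntegrable hr8.le
    apply ContinuousOn.fun_smul
    · apply (continuousOn_id.sub continuousOn_const).zpow₀
      intro ζ hζ
      left
      simp only [Pi.sub_apply, id_eq]
      rw [sub_ne_zero]
      rintro rfl
      have := mem_sphere.1 hζ
      rw [dist_self] at this
      exact hr8.ne' this.symm
    · exact x'.continuous.comp_continuousOn (hcont p hp j)
  set M : ℝ := 64 * C * (1 + (d : ℝ)) * (d : ℝ) / r ^ 2 with hM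
  have hd0 : (0:ℝ) ≤ (d:ℝ) := Nat.cast_nonneg d
  have hM0 : 0 ≤ M := by
    apply div_nonneg _ (by positivity)
    have h1 : (0:ℝ) ≤ 64 * C := by linarith
    have h2 : (0:ℝ) ≤ 1 + (d:ℝ) := by linarith
    have := mul_nonneg (mul_nonneg h1 h2) hd0
    linarith
  -- the key quadratic estimate
  have hkey : ∀ h : Fin d → ℂ, ‖h‖ ≤ r / 8 →
      ‖f (a + h) - f a - ∑ j : Fin d, h j • v j‖ ≤ M * ‖h‖ ^ 2 := by
    intro h hh
    have hMh : (0:ℝ) ≤ M * ‖h‖ ^ 2 := mul_nonneg hM0 (by positivity)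
    apply aux_norming hN hMh
    intro x' hx'N hx'1
    set Q : ℕ → (Fin d → ℂ) := fun i k => if (k : ℕ) < i then a k + h k else a k with hQ
    have hQ0 : Q 0 = a := by funext k; simp [hQ]
    have hQd : Q d = a + h := by funext k; simp [hQ, k.isLt]
    have hQmem : ∀ i, Q i ∈ closedBall a (r / 8) := by
      intro i
      rw [mem_closedBall, dist_pi_le_iff hr8.le]
      intro k
      simp only [hQ]
      split_ifs
      · simpa [dist_eq_norm] using le_trans (norm_le_pi_norm h k) hh
      · simp [hr8.le]
    have hQj : ∀ (i : ℕ) (k : Fin d), i ≤ (k : ℕ) → Q i k = a k := by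
      intro i k hik
      simp only [hQ]
      rw [if_neg (by omega)]
    have hQstep : ∀ (i : ℕ) (hi : i < d),
        Q (i + 1) = Function.update (Q i) ⟨i, hi⟩ (a ⟨i, hi⟩ + h ⟨i, hi⟩) := by
      intro i hi
      funext k
      rcases eq_or_ne k ⟨i, hi⟩ with rfl | hk
      · rw [Function.update_self]
        simp only [hQ]
        rw [if_pos (by omega)]
      · rw [Function.update_of_ne hk]
        have hki : (k : ℕ) ≠ i := fun hc => hk (Fin.ext hc)
        simp only [hQ]
        by_cases hlt : (k : ℕ) < i
        · rw [if_pos (by omega), if_pos hlt]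
        · rw [if_neg (by omega), if_neg hlt]
    set W : ℕ → ℂ := fun m => if hm : m < d then h ⟨m, hm⟩ * x' (v ⟨m, hm⟩) else 0 with hW
    have hWsum : ∑ j : Fin d, h j * x' (v j) = ∑ i ∈ Finset.range d, W i := by
      rw [← Fin.sum_univ_eq_sum_range W d]
      apply Finset.sum_congr rfl
      intro j _
      simp [hW]
    have hEq : x' (f (a + h) - f a - ∑ j : Fin d, h j • v j)
        = ∑ i ∈ Finset.range d, (x' (f (Q (i + 1))) - x' (f (Q i)) - W i) := by
      rw [Finset.sum_sub_distrib, Finset.sum_range_sub (fun i => x' (f (Q i))), hQ0, hQd,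
        ← hWsum, map_sub, map_sub, map_sum]
      simp only [map_smul, smul_eq_mul]
    have hterm : ∀ i ∈ Finset.range d,
        ‖x' (f (Q (i + 1))) - x' (f (Q i)) - W i‖
          ≤ 64 * C * (1 + (d : ℝ)) / r ^ 2 * ‖h‖ ^ 2 := by
      intro i hi
      have hid : i < d := Finset.mem_range.1 hi
      set j : Fin d := ⟨i, hid⟩ with hj
      have hp8 : Q i ∈ closedBall a (r / 8) := hQmem i
      have hp2 : Q i ∈ closedBall a (r / 2) :=
        closedBall_subset_closedBall (by linarith) hp8
      have hpj : Q i j = a j := hQj i j (le_refl i)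
      set ψ : ℂ → ℂ := fun w => x' (f (Function.update (Q i) j w)) with hψ
      have hψd : DifferentiableOn ℂ ψ (ball (a j) (r / 2)) := by
        have := hsd x' hx'N j (Q i) hp2
        rwa [hpj] at this
      have hψb : ∀ z ∈ ball (a j) (r / 2), ‖ψ z‖ ≤ C := by
        have := hsb x' hx'1 j (Q i) hp2
        rwa [hpj] at this
      have hψ1 : ψ (a j + h j) = x' (f (Q (i + 1))) := by
        rw [hψ, hQstep i hid]
      have hψ0 : ψ (a j) = x' (f (Q i)) := by
        rw [hψ]
        simp only
        rw [← hpj, Function.update_eq_self]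
      have hWi : W i = h j * x' (v j) := by rw [hW]; simp [hid, hj]
      have hhj : ‖h j‖ ≤ ‖h‖ := norm_le_pi_norm h j
      have hzball : a j + h j ∈ ball (a j) (r / 2) := by
        rw [mem_ball, dist_eq_norm, add_sub_cancel_left]
        linarith
      have hT := aux_taylor2 hr2 hψd hψb hzball
      rw [add_sub_cancel_left] at hT
      -- comparison of slice derivatives via the Cauchy integral formula
      have hD : ‖deriv ψ (a j) - x' (v j)‖ ≤ 64 * (d : ℝ) * C / r ^ 2 * ‖h‖ := by
        rw [hx'v x' hx'N j, hrep x' hx'N j (Q i) hp2 hpj,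
          hrep x' hx'N j a (mem_closedBall_self hr2.le) rfl, ← smul_sub,
          ← circleIntegral.integral_sub (hsInt x' (Q i) hp8 j)
            (hsInt x' a (mem_closedBall_self hr8.le) j)]
        have hbd : ∀ ζ ∈ sphere (a j) (r / 8),
            ‖(ζ - a j) ^ (-2 : ℤ) • x' (f (Function.update (Q i) j ζ))
              - (ζ - a j) ^ (-2 : ℤ) • x' (f (Function.update a j ζ))‖
              ≤ ((r / 8 : ℝ) ^ 2)⁻¹ * ((d : ℝ) * (8 * C / r * ‖h‖)) := by
          intro ζ hζ
          have hζr : dist ζ (a j) = r / 8 := mem_sphere.1 hζ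
          rw [← smul_sub, norm_smul]
          have hnorm : ‖ζ - a j‖ = r / 8 := by rw [← dist_eq_norm]; exact hζr
          have hn : ‖(ζ - a j) ^ (-2 : ℤ)‖ = ((r / 8 : ℝ) ^ 2)⁻¹ := by
            rw [norm_zpow, hnorm, zpow_neg]
            congr 1
          rw [hn]
          apply mul_le_mul_of_nonneg_left _ (by positivity)
          -- inner telescoping
          set P : ℕ → (Fin d → ℂ) := fun m => Function.update (Q m) j ζ with hP
          have hPmem : ∀ m, P m ∈ closedBall a (r / 8) := fun m =>
            aux_update_mem (s := r / 8) (t := r / 8) (hQmem m) (le_of_eq hζr) le_rfl hr8.le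
          have hP0 : P 0 = Function.update a j ζ := by rw [hP]; simp only; rw [hQ0]
          have htel2 : x' (f (Function.update (Q i) j ζ)) - x' (f (Function.update a j ζ))
              = ∑ m ∈ Finset.range i, (x' (f (P (m + 1))) - x' (f (P m))) := by
            rw [Finset.sum_range_sub (fun m => x' (f (P m))), hP0]
          rw [htel2]
          have hstep2 : ∀ m ∈ Finset.range i,
              ‖x' (f (P (m + 1))) - x' (f (P m))‖ ≤ 8 * C / r * ‖h‖ := by
            intro m hm
            have hmi : m < i := Finset.mem_range.1 hm
            have hmd : m < d := lt_trans hmi hid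
            set jm : Fin d := ⟨m, hmd⟩ with hjm
            have hne : jm ≠ j := by
              rw [hjm, hj, Ne, Fin.mk.injEq]
              omega
            have hPstep : P (m + 1) = Function.update (P m) jm (a jm + h jm) := by
              rw [hP]
              simp only
              rw [hQstep m hmd, ← hjm]
              exact Function.update_comm hne _ _ _
            have hPm2 : P m ∈ closedBall a (r / 2) :=
              closedBall_subset_closedBall (by linarith) (hPmem m)
            have hPmjm : P m jm = a jm := by
              rw [hP]
              simp only
              rw [Function.update_of_ne hne]
              exact hQj m jm (le_refl m)
            have hsdm := hsd x' hx'N jm (P m) hPm2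
            rw [hPmjm] at hsdm
            have hsbm := hsb x' hx'1 jm (P m) hPm2
            rw [hPmjm] at hsbm
            have hzb : a jm + h jm ∈ ball (a jm) (r / 2) := by
              rw [mem_ball, dist_eq_norm, add_sub_cancel_left]
              have := norm_le_pi_norm h jm
              linarith
            have hlipm := aux_lip hr2 hsdm hsbm hzb
            have hkey2 : ‖x' (f (Function.update (P m) jm (a jm + h jm)))
                - x' (f (Function.update (P m) jm (a jm)))‖
                ≤ 4 * C / (r / 2) * ‖a jm + h jm - a jm‖ := hlipm
            have hself : Function.update (P m) jm (a jm) = P m := by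
              rw [← hPmjm]
              exact Function.update_eq_self jm (P m)
            rw [add_sub_cancel_left, ← hPstep, hself, hdivC] at hkey2
            refine le_trans hkey2 ?_
            exact mul_le_mul_of_nonneg_left (norm_le_pi_norm h jm)
              (div_nonneg (by linarith) hr0.le)
          calc ‖∑ m ∈ Finset.range i, (x' (f (P (m + 1))) - x' (f (P m)))‖
              ≤ ∑ m ∈ Finset.range i, ‖x' (f (P (m + 1))) - x' (f (P m))‖ :=
                norm_sum_le _ _
            _ ≤ ∑ _m ∈ Finset.range i, (8 * C / r * ‖h‖) := Finset.sum_le_sum hstep2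
            _ = (i : ℝ) * (8 * C / r * ‖h‖) := by
                rw [Finset.sum_const, Finset.card_range, nsmul_eq_mul]
            _ ≤ (d : ℝ) * (8 * C / r * ‖h‖) := by
                apply mul_le_mul_of_nonneg_right _ (by positivity)
                exact_mod_cast Nat.cast_le.2 (le_of_lt hid)
        have hfin := circleIntegral.norm_two_pi_i_inv_smul_integral_le_of_norm_le_const
          hr8.le hbd
        refine le_trans hfin (le_of_eq ?_)
        field_simp
        ring
      -- assemble the two parts
      have hsplit : x' (f (Q (i + 1))) - x' (f (Q i)) - W i
          = (ψ (a j + h j) - ψ (a j) - h j * deriv ψ (a j))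
            + h j * (deriv ψ (a j) - x' (v j)) := by
        rw [hψ1, hψ0, hWi]; ring
      rw [hsplit]
      have h16 : 16 * C / (r / 2) ^ 2 * ‖h j‖ ^ 2 ≤ 64 * C / r ^ 2 * ‖h‖ ^ 2 := by
        have h1 : 16 * C / (r / 2) ^ 2 = 64 * C / r ^ 2 := by field_simp; ring
        rw [h1]
        apply mul_le_mul_of_nonneg_left _ (by positivity)
        apply pow_le_pow_left₀ (norm_nonneg _) hhj
      calc ‖(ψ (a j + h j) - ψ (a j) - h j * deriv ψ (a j))
            + h j * (deriv ψ (a j) - x' (v j))‖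
          ≤ ‖ψ (a j + h j) - ψ (a j) - h j * deriv ψ (a j)‖
            + ‖h j * (deriv ψ (a j) - x' (v j))‖ := norm_add_le _ _
        _ ≤ 64 * C / r ^ 2 * ‖h‖ ^ 2 + ‖h‖ * (64 * (d : ℝ) * C / r ^ 2 * ‖h‖) := by
            apply add_le_add (le_trans hT h16)
            rw [norm_mul]
            apply mul_le_mul hhj hD (norm_nonneg _) (norm_nonneg _)
        _ = 64 * C * (1 + (d : ℝ)) / r ^ 2 * ‖h‖ ^ 2 := by ring
    rw [hEq]
    calc ‖∑ i ∈ Finset.range d, (x' (f (Q (i + 1))) - x' (f (Q i)) - W i)‖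
        ≤ ∑ i ∈ Finset.range d, ‖x' (f (Q (i + 1))) - x' (f (Q i)) - W i‖ := norm_sum_le _ _
      _ ≤ ∑ _i ∈ Finset.range d, (64 * C * (1 + (d : ℝ)) / r ^ 2 * ‖h‖ ^ 2) :=
          Finset.sum_le_sum hterm
      _ = M * ‖h‖ ^ 2 := by
          rw [Finset.sum_const, Finset.card_range, nsmul_eq_mul, hM]
          ring
  -- conclusion
  set L : (Fin d → ℂ) →L[ℂ] E :=
    ∑ j : Fin d, (ContinuousLinearMap.proj j : (Fin d → ℂ) →L[ℂ] ℂ).smulRight (v j) with hL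
  have hLapp : ∀ h : Fin d → ℂ, L h = ∑ j : Fin d, h j • v j := by
    intro h
    rw [hL, ContinuousLinearMap.sum_apply]
    apply Finset.sum_congr rfl
    intro j _
    rw [ContinuousLinearMap.smulRight_apply, ContinuousLinearMap.proj_apply]
  have hder : HasFDerivAt f L a := by
    rw [hasFDerivAt_iff_isLittleO_nhds_zero, Asymptotics.isLittleO_iff]
    intro c hc
    rw [Metric.eventually_nhds_iff]
    refine ⟨min (r / 8) (c / (M + 1)), lt_min hr8 (by positivity), fun {h} hdist => ?_⟩
    have hh1 : ‖h‖ < min (r / 8) (c / (M + 1)) := by rwa [dist_zero_right] at hdist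
    have hh8 : ‖h‖ ≤ r / 8 := le_of_lt (lt_of_lt_of_le hh1 (min_le_left _ _))
    have hhc : ‖h‖ ≤ c / (M + 1) := le_of_lt (lt_of_lt_of_le hh1 (min_le_right _ _))
    have hM1 : (0:ℝ) < M + 1 := by linarith
    calc ‖f (a + h) - f a - L h‖ = ‖f (a + h) - f a - ∑ j : Fin d, h j • v j‖ := by
          rw [hLapp]
      _ ≤ M * ‖h‖ ^ 2 := hkey h hh8
      _ ≤ c * ‖h‖ := by
          have h1 : M * ‖h‖ ≤ M * (c / (M + 1)) :=
            mul_le_mul_of_nonneg_left hhc hM0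
          have h2 : M * (c / (M + 1)) ≤ c := by
            have hcd : 0 ≤ c / (M + 1) := div_nonneg hc.le hM1.le
            have h3 : M * (c / (M + 1)) ≤ (M + 1) * (c / (M + 1)) :=
              mul_le_mul_of_nonneg_right (by linarith) hcd
            have h4 : (M + 1) * (c / (M + 1)) = c := by field_simp
            linarith
          nlinarith [norm_nonneg h]
  exact hder.differentiableAt.differentiableWithinAt
end

section
/- Let E be a complex Banach space, O ⊆ ℂᵈ open, and f : O → E continuous and holomorphic in each variable separately. Then f is holomorphic on O, and for each polydisc with closure in O the Cauchy integral formula f(z) = (2πi)^{-d} ∮...∮ f(w) / ((w₁ - z₁)···(w_d - z_d)) dw₁ ··· dw_d holds for z in the open polydisc. -/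
open MeasureTheory Real

set_option linter.unusedSectionVars false

section OsgoodAux

open Metric Set Function

variable {E : Type*} [NormedAddCommGroup E] [NormedSpace ℂ E] [CompleteSpace E]
variable {d : ℕ} {O : Set (Fin d → ℂ)} {f : (Fin d → ℂ) → E}

variable {d : ℕ} {O : Set (Fin d → ℂ)} {f : (Fin d → ℂ) → E}

lemma sliceDiffAt (hsep : ∀ j : Fin d, ∀ z ∈ O,
      DifferentiableAt ℂ (fun w : ℂ => f (Function.update z j w)) (z j))
    {z : Fin d → ℂ} {j : Fin d} {w : ℂ} (hv : Function.update z j w ∈ O) :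
    DifferentiableAt ℂ (fun t : ℂ => f (Function.update z j t)) w := by
  have h := hsep j _ hv
  simpa [Function.update_idem] using h

lemma dist_update_le {z z' : Fin d → ℂ} {j : Fin d} {w : ℂ} :
    dist (Function.update z j w) (Function.update z' j w) ≤ dist z z' := by
  refine (dist_pi_le_iff dist_nonneg).2 fun i => ?_
  rcases eq_or_ne i j with rfl | hij
  · simpa using dist_nonneg
  · simp only [Function.update_of_ne hij]
    exact dist_le_pi_dist z z' i

/-- The partial derivative of `f` in direction `j`. -/
noncomputable def pderiv' (f : (Fin d → ℂ) → E) (j : Fin d) (z : Fin d → ℂ) : E :=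
  deriv (fun w => f (Function.update z j w)) (z j)

lemma pderiv'_contAt (hO : IsOpen O) (hcont : ContinuousOn f O)
    (hsep : ∀ j : Fin d, ∀ z ∈ O,
      DifferentiableAt ℂ (fun w : ℂ => f (Function.update z j w)) (z j))
    {z₀ : Fin d → ℂ} (hz₀ : z₀ ∈ O) (j : Fin d) {ε : ℝ} (hε : 0 < ε) :
    ∃ δ > 0, ∀ z, dist z z₀ < δ → ‖pderiv' f j z - pderiv' f j z₀‖ ≤ ε := by
  obtain ⟨ρ, hρ, hball⟩ := Metric.isOpen_iff.1 hO z₀ hz₀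
  set r : ℝ := ρ / 4 with hrdef
  have hr : 0 < r := by positivity
  have hK : closedBall z₀ (3 * r) ⊆ O := by
    refine (closedBall_subset_ball ?_).trans hball
    rw [hrdef]; linarith
  -- the open set where the slice through `z` lives
  have hUopen : ∀ z : Fin d → ℂ, IsOpen {w : ℂ | Function.update z j w ∈ O} :=
    fun z => hO.preimage (continuous_const.update j continuous_id)
  have hUdiff : ∀ z : Fin d → ℂ,
      DifferentiableOn ℂ (fun w => f (Function.update z j w))
        {w : ℂ | Function.update z j w ∈ O} :=
    fun z w hw => (sliceDiffAt hsep hw).differentiableWithinAt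
  -- membership facts
  have hmem : ∀ z ∈ closedBall z₀ r, ∀ z' ∈ closedBall z₀ r, ∀ w ∈ closedBall (z j) r,
      Function.update z' j w ∈ closedBall z₀ (3 * r) := by
    intro z hz z' hz' w hw
    simp only [mem_closedBall] at *
    refine (dist_pi_le_iff (by positivity)).2 fun i => ?_
    rcases eq_or_ne i j with rfl | hij
    · simp only [Function.update_self]
      calc dist w (z₀ i) ≤ dist w (z i) + dist (z i) (z₀ i) := dist_triangle _ _ _
        _ ≤ r + dist z z₀ := by
            gcongr
            exact dist_le_pi_dist z z₀ i
        _ ≤ 3 * r := by linarith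
    · simp only [Function.update_of_ne hij]
      calc dist (z' i) (z₀ i) ≤ dist z' z₀ := dist_le_pi_dist z' z₀ i
        _ ≤ 3 * r := by linarith
  have hsub : ∀ z ∈ closedBall z₀ r, ∀ z' ∈ closedBall z₀ r,
      closedBall (z j) r ⊆ {w : ℂ | Function.update z' j w ∈ O} :=
    fun z hz z' hz' w hw => hK (hmem z hz z' hz' w hw)
  -- cderiv representation
  have hrep : ∀ z ∈ closedBall z₀ r, ∀ z' ∈ closedBall z₀ r,
      Complex.cderiv r (fun w => f (Function.update z' j w)) (z j)
        = deriv (fun w => f (Function.update z' j w)) (z j) :=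
    fun z hz z' hz' => Complex.cderiv_eq_deriv (hUopen z') (hUdiff z') hr (hsub z hz z' hz')
  -- uniform continuity of f on the big closed ball
  have hK' : IsCompact (closedBall z₀ (3 * r)) := isCompact_closedBall _ _
  have huc := hK'.uniformContinuousOn_of_continuous (hcont.mono hK)
  obtain ⟨δ₁, hδ₁, H1⟩ := Metric.uniformContinuousOn_iff.1 huc (ε * r / 2) (by positivity)
  -- continuity of the derivative of the slice through z₀
  have hz₀mem : z₀ j ∈ {w : ℂ | Function.update z₀ j w ∈ O} := by
    simpa [Function.update_eq_self] using hz₀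
  have hdc : ContinuousAt (deriv (fun w => f (Function.update z₀ j w))) (z₀ j) := by
    have := (((hUdiff z₀).analyticOnNhd (hUopen z₀)).deriv).continuousOn
    exact this.continuousAt ((hUopen z₀).mem_nhds hz₀mem)
  obtain ⟨δ₂, hδ₂, H2⟩ := Metric.continuousAt_iff.1 hdc (ε / 2) (by positivity)
  refine ⟨min r (min δ₁ δ₂), by positivity, fun z hz => ?_⟩
  have hzr : z ∈ closedBall z₀ r := mem_closedBall.2 ((lt_min_iff.1 hz).1.le)
  have hz₀r : z₀ ∈ closedBall z₀ r := mem_closedBall_self hr.le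
  have hzδ₁ : dist z z₀ < δ₁ := lt_of_lt_of_le hz ((min_le_right _ _).trans (min_le_left _ _))
  have hzδ₂ : dist z z₀ < δ₂ := lt_of_lt_of_le hz ((min_le_right _ _).trans (min_le_right _ _))
  -- first bracket : same center, different slices
  have hcont1 : ContinuousOn (fun w => f (Function.update z j w)) (sphere (z j) r) :=
    ((hUdiff z).continuousOn).mono ((sphere_subset_closedBall).trans (hsub z hzr z hzr))
  have hcont2 : ContinuousOn (fun w => f (Function.update z₀ j w)) (sphere (z j) r) :=
    ((hUdiff z₀).continuousOn).mono ((sphere_subset_closedBall).trans (hsub z hzr z₀ hz₀r))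
  have hB1 : ‖Complex.cderiv r (fun w => f (Function.update z j w)) (z j)
      - Complex.cderiv r (fun w => f (Function.update z₀ j w)) (z j)‖ ≤ ε / 2 := by
    rw [← Complex.cderiv_sub hr hcont1 hcont2]
    have := Complex.norm_cderiv_le (f := (fun w => f (Function.update z j w))
        - fun w => f (Function.update z₀ j w)) (M := ε * r / 2) (z := z j) hr ?_
    · calc _ ≤ ε * r / 2 / r := this
        _ = ε / 2 := by field_simp
    · intro w hw
      have hwK : w ∈ closedBall (z j) r := sphere_subset_closedBall hw
      have hx := hmem z hzr z hzr w hwK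
      have hy := hmem z hzr z₀ hz₀r w hwK
      have hd : dist (Function.update z j w) (Function.update z₀ j w) < δ₁ :=
        lt_of_le_of_lt dist_update_le hzδ₁
      have := H1 _ hx _ hy hd
      simp only [Pi.sub_apply]
      rw [← dist_eq_norm]
      exact this.le
  -- second bracket : same slice, moving point
  have hB2 : ‖deriv (fun w => f (Function.update z₀ j w)) (z j)
      - deriv (fun w => f (Function.update z₀ j w)) (z₀ j)‖ ≤ ε / 2 := by
    have : dist (z j) (z₀ j) < δ₂ := lt_of_le_of_lt (dist_le_pi_dist z z₀ j) hzδ₂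
    have := H2 this
    rw [← dist_eq_norm]
    exact this.le
  have e1 : pderiv' f j z = Complex.cderiv r (fun w => f (Function.update z j w)) (z j) :=
    (hrep z hzr z hzr).symm
  have e2 : Complex.cderiv r (fun w => f (Function.update z₀ j w)) (z j)
      = deriv (fun w => f (Function.update z₀ j w)) (z j) := hrep z hzr z₀ hz₀r
  calc ‖pderiv' f j z - pderiv' f j z₀‖
      = ‖(Complex.cderiv r (fun w => f (Function.update z j w)) (z j)
          - Complex.cderiv r (fun w => f (Function.update z₀ j w)) (z j))
        + (deriv (fun w => f (Function.update z₀ j w)) (z j)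
          - deriv (fun w => f (Function.update z₀ j w)) (z₀ j))‖ := by
        rw [e1]; unfold pderiv'; rw [← e2]; congr 1; abel
    _ ≤ ε / 2 + ε / 2 := (norm_add_le _ _).trans (add_le_add hB1 hB2)
    _ = ε := by ring

set_option maxHeartbeats 1000000 in
lemma hasFDerivAt_of_sep (hO : IsOpen O) (hcont : ContinuousOn f O)
    (hsep : ∀ j : Fin d, ∀ z ∈ O,
      DifferentiableAt ℂ (fun w : ℂ => f (Function.update z j w)) (z j))
    {z₀ : Fin d → ℂ} (hz₀ : z₀ ∈ O) :
    HasFDerivAt f (∑ j : Fin d,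
      (ContinuousLinearMap.proj j : (Fin d → ℂ) →L[ℂ] ℂ).smulRight (pderiv' f j z₀)) z₀ := by
  set L : (Fin d → ℂ) →L[ℂ] E := ∑ j : Fin d,
      (ContinuousLinearMap.proj j : (Fin d → ℂ) →L[ℂ] ℂ).smulRight (pderiv' f j z₀) with hL
  refine HasFDerivAt.of_isLittleO (Asymptotics.isLittleO_iff.2 fun c hc => ?_)
  set ε : ℝ := c / (d + 1) with hεdef
  have hε : 0 < ε := by positivity
  obtain ⟨ρ, hρ, hball⟩ := Metric.isOpen_iff.1 hO z₀ hz₀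
  have H : ∀ j : Fin d, ∃ δ > 0, ∀ z, dist z z₀ < δ →
      ‖pderiv' f j z - pderiv' f j z₀‖ ≤ ε := fun j => pderiv'_contAt hO hcont hsep hz₀ j hε
  choose Δ hΔpos hΔ using H
  obtain ⟨δ', hδ'pos, hδ'⟩ : ∃ δ > 0, ∀ j : Fin d, δ ≤ Δ j := by
    rcases isEmpty_or_nonempty (Fin d) with he | he
    · exact ⟨1, one_pos, fun j => isEmptyElim j⟩
    · refine ⟨Finset.univ.inf' Finset.univ_nonempty Δ, ?_, fun j => Finset.inf'_le _ (by simp)⟩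
      exact (Finset.lt_inf'_iff _).2 fun j _ => hΔpos j
  set δ : ℝ := min ρ δ' with hδdef
  have hδpos : 0 < δ := lt_min hρ hδ'pos
  rw [Filter.eventually_iff_exists_mem]
  refine ⟨ball z₀ δ, ball_mem_nhds _ hδpos, fun z hz => ?_⟩
  rw [mem_ball] at hz
  -- telescoping sequence
  set U : ℕ → (Fin d → ℂ) := fun k i => if (i : ℕ) < k then z i else z₀ i with hUdef
  have hU0 : U 0 = z₀ := funext fun i => if_neg (Nat.not_lt_zero _)
  have hUd : U d = z := funext fun i => if_pos i.isLt
  have hUcoord : ∀ k (i : Fin d), dist (U k i) (z₀ i) ≤ dist z z₀ := by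
    intro k i
    by_cases h : (i : ℕ) < k
    · simp only [hUdef, if_pos h]; exact dist_le_pi_dist z z₀ i
    · simp only [hUdef, if_neg h, dist_self]; exact dist_nonneg
  have hUkj : ∀ j : Fin d, U (j : ℕ) j = z₀ j := fun j => if_neg (lt_irrefl _)
  have hUk1 : ∀ j : Fin d, U ((j : ℕ) + 1) = Function.update (U (j : ℕ)) j (z j) := by
    intro j
    funext i
    rcases eq_or_ne i j with rfl | hij
    · simp [hUdef, Nat.lt_succ_self]
    · have hne : (i : ℕ) ≠ (j : ℕ) := fun h => hij (Fin.val_injective h)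
      have : ((i : ℕ) < (j : ℕ) + 1) ↔ ((i : ℕ) < (j : ℕ)) :=
        ⟨fun h => lt_of_le_of_ne (Nat.lt_succ_iff.1 h) hne, fun h => h.trans (Nat.lt_succ_self _)⟩
      simp [hUdef, Function.update_of_ne hij, this]
  -- per-coordinate mean value estimate
  have term : ∀ j : Fin d,
      ‖f (U ((j : ℕ) + 1)) - f (U (j : ℕ)) - (z j - z₀ j) • pderiv' f j z₀‖
        ≤ ε * ‖z - z₀‖ := by
    intro j
    set e : E := pderiv' f j z₀ with he
    set s : Set ℂ := ball (z₀ j) δ with hs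
    have hvmem : ∀ t ∈ s, Function.update (U (j : ℕ)) j t ∈ ball z₀ δ := by
      intro t ht
      rw [mem_ball] at ht ⊢
      refine (dist_pi_lt_iff hδpos).2 fun i => ?_
      rcases eq_or_ne i j with rfl | hij
      · simpa using ht
      · rw [Function.update_of_ne hij]
        exact lt_of_le_of_lt (hUcoord _ i) hz
    have hvO : ∀ t ∈ s, Function.update (U (j : ℕ)) j t ∈ O := fun t ht =>
      hball (ball_subset_ball (min_le_left _ _) (hvmem t ht))
    have hder : ∀ t ∈ s, HasDerivWithinAt
        (fun t : ℂ => f (Function.update (U (j : ℕ)) j t) - t • e)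
        (pderiv' f j (Function.update (U (j : ℕ)) j t) - e) s t := by
      intro t ht
      have h1 : DifferentiableAt ℂ (fun w => f (Function.update (U (j : ℕ)) j w)) t :=
        sliceDiffAt hsep (hvO t ht)
      have h2 : deriv (fun w => f (Function.update (U (j : ℕ)) j w)) t
          = pderiv' f j (Function.update (U (j : ℕ)) j t) := by
        unfold pderiv'
        simp [Function.update_idem]
      have h3 : HasDerivAt (fun w => f (Function.update (U (j : ℕ)) j w))
          (pderiv' f j (Function.update (U (j : ℕ)) j t)) t := h2 ▸ h1.hasDerivAt
      have h4 : HasDerivAt (fun t : ℂ => t • e) e t := by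
        simpa using (hasDerivAt_id t).smul_const e
      exact (h3.sub h4).hasDerivWithinAt
    have hbound : ∀ t ∈ s, ‖pderiv' f j (Function.update (U (j : ℕ)) j t) - e‖ ≤ ε := by
      intro t ht
      have h5 : dist (Function.update (U (j : ℕ)) j t) z₀ < δ := mem_ball.1 (hvmem t ht)
      have h6 : δ ≤ Δ j := (min_le_right ρ δ').trans (hδ' j)
      exact hΔ j _ (lt_of_lt_of_le h5 h6)
    have hz₀s : z₀ j ∈ s := mem_ball_self hδpos
    have hzs : z j ∈ s := mem_ball.2 (lt_of_le_of_lt (dist_le_pi_dist z z₀ j) hz)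
    have mvt := (convex_ball (z₀ j) δ).norm_image_sub_le_of_norm_hasDerivWithin_le
      hder hbound hz₀s hzs
    have hid1 : Function.update (U (j : ℕ)) j (z₀ j) = U (j : ℕ) := by
      conv_lhs => rw [← hUkj j]
      exact Function.update_eq_self j (U (j : ℕ))
    have hid2 : (f (Function.update (U (j : ℕ)) j (z j)) - z j • e)
        - (f (Function.update (U (j : ℕ)) j (z₀ j)) - z₀ j • e)
        = f (U ((j : ℕ) + 1)) - f (U (j : ℕ)) - (z j - z₀ j) • e := by
      rw [hid1, ← hUk1 j, sub_smul]; abel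
    rw [hid2] at mvt
    refine mvt.trans ?_
    have : ‖z j - z₀ j‖ ≤ ‖z - z₀‖ := by
      simpa using norm_le_pi_norm (z - z₀) j
    exact mul_le_mul_of_nonneg_left this hε.le
  -- assembling
  have sumEq : f z - f z₀ = ∑ j : Fin d, (f (U ((j : ℕ) + 1)) - f (U (j : ℕ))) := by
    rw [Fin.sum_univ_eq_sum_range (fun k => f (U (k + 1)) - f (U k)) d,
      Finset.sum_range_sub (fun k => f (U k)), hU0, hUd]
  have LEq : L (z - z₀) = ∑ j : Fin d, (z j - z₀ j) • pderiv' f j z₀ := by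
    rw [hL, ContinuousLinearMap.sum_apply]
    refine Finset.sum_congr rfl fun j _ => ?_
    simp [ContinuousLinearMap.smulRight_apply]
  have main : f z - f z₀ - L (z - z₀)
      = ∑ j : Fin d, (f (U ((j : ℕ) + 1)) - f (U (j : ℕ)) - (z j - z₀ j) • pderiv' f j z₀) := by
    rw [sumEq, LEq, ← Finset.sum_sub_distrib]
  calc ‖f z - f z₀ - L (z - z₀)‖
      ≤ ∑ j : Fin d, ‖f (U ((j : ℕ) + 1)) - f (U (j : ℕ)) - (z j - z₀ j) • pderiv' f j z₀‖ := by
        rw [main]; exact norm_sum_le _ _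
    _ ≤ ∑ _j : Fin d, ε * ‖z - z₀‖ := Finset.sum_le_sum fun j _ => term j
    _ = (d : ℝ) * (ε * ‖z - z₀‖) := by
        rw [Finset.sum_const, Finset.card_univ, Fintype.card_fin, nsmul_eq_mul]
    _ ≤ c * ‖z - z₀‖ := by
        have h1 : (0:ℝ) ≤ ‖z - z₀‖ := norm_nonneg _
        have h2 : (d : ℝ) * ε ≤ c := by
          rw [hεdef]
          rw [mul_div_assoc']
          rw [div_le_iff₀ (by positivity)]
          nlinarith [hc]
        nlinarith

lemma continuous_torusMap' {d : ℕ} (a : Fin d → ℂ) (R : Fin d → ℝ) :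
    Continuous (torusMap a R) := by
  refine continuous_pi fun i => ?_
  exact continuous_const.add (continuous_const.mul
    (Complex.continuous_exp.comp ((Complex.continuous_ofReal.comp (continuous_apply i)).mul
      continuous_const)))

lemma torusMap_mem_closedBall {d : ℕ} (a : Fin d → ℂ) {r : ℝ} (hr : 0 < r) (θ : Fin d → ℝ) :
    torusMap a (fun _ => r) θ ∈ closedBall a r := by
  refine (dist_pi_le_iff hr.le).2 fun i => ?_
  simp only [torusMap, dist_eq_norm, add_sub_cancel_left]
  rw [norm_mul]
  simp [Complex.norm_exp_ofReal_mul_I, abs_of_pos hr]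

lemma prod_sub_ne_zero {d : ℕ} {a w z : Fin d → ℂ} {r : ℝ}
    (hw : ∀ j, dist (w j) (a j) = r) (hz : z ∈ ball a r) :
    (∏ j, (w j - z j)) ≠ 0 := by
  rw [Finset.prod_ne_zero_iff]
  intro j _
  rw [sub_ne_zero]
  intro hwz
  have h2 : dist (z j) (a j) < r := lt_of_le_of_lt (dist_le_pi_dist z a j) (mem_ball.1 hz)
  rw [← hwz, hw j] at h2
  exact lt_irrefl _ h2

lemma torusMap_dist {d : ℕ} (a : Fin d → ℂ) {r : ℝ} (hr : 0 < r) (θ : Fin d → ℝ) (j : Fin d) :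
    dist (torusMap a (fun _ => r) θ j) (a j) = r := by
  simp only [torusMap, dist_eq_norm, add_sub_cancel_left]
  rw [norm_mul]
  simp [Complex.norm_exp_ofReal_mul_I, abs_of_pos hr]

lemma torusIntegrable_kernel {d : ℕ} {O : Set (Fin d → ℂ)} {f : (Fin d → ℂ) → E}
    (hcont : ContinuousOn f O) {a z : Fin d → ℂ} {r : ℝ} (hr : 0 < r)
    (hsub : closedBall a r ⊆ O) (hz : z ∈ ball a r) :
    TorusIntegrable (fun w => (∏ j, (w j - z j))⁻¹ • f w) a (fun _ => r) := by
  have hT : ∀ w ∈ {w : Fin d → ℂ | ∀ j, dist (w j) (a j) = r}, w ∈ O := fun w hw =>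
    hsub ((dist_pi_le_iff hr.le).2 fun j => (hw j).le)
  have hg : ContinuousOn (fun w : Fin d → ℂ => (∏ j, (w j - z j))⁻¹ • f w)
      {w | ∀ j, dist (w j) (a j) = r} := by
    refine ContinuousOn.smul (ContinuousOn.inv₀ ?_ ?_) (hcont.mono hT)
    · exact (continuous_finset_prod _ fun j _ =>
        (continuous_apply j).sub continuous_const).continuousOn
    · exact fun w hw => prod_sub_ne_zero hw hz
  have h2 : ContinuousOn
      (fun θ : Fin d → ℝ => (∏ j, (torusMap a (fun _ => r) θ j - z j))⁻¹ •
        f (torusMap a (fun _ => r) θ)) (Icc (0 : Fin d → ℝ) fun _ => 2 * π) :=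
    hg.comp (continuous_torusMap' a _).continuousOn
      (fun θ _ => fun j => torusMap_dist a hr θ j)
  exact h2.integrableOn_compact isCompact_Icc

lemma two_pi_I_ne_zero' : (2 * (π : ℂ) * Complex.I) ≠ 0 := by
  simp [Real.pi_ne_zero, Complex.I_ne_zero, Complex.ofReal_ne_zero]

lemma cauchy_polydisc : ∀ (d : ℕ) (O : Set (Fin d → ℂ)), IsOpen O →
    ∀ f : (Fin d → ℂ) → E, ContinuousOn f O →
    (∀ j : Fin d, ∀ z ∈ O, DifferentiableAt ℂ (fun w : ℂ => f (Function.update z j w)) (z j)) →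
    ∀ (a : Fin d → ℂ) (r : ℝ), 0 < r → closedBall a r ⊆ O →
    ∀ z ∈ ball a r,
      f z = ((2 * π * Complex.I) ^ d)⁻¹ •
        torusIntegral (fun w => (∏ j, (w j - z j))⁻¹ • f w) a (fun _ => r) := by
  intro d
  induction d with
  | zero =>
    intro O hO f hcont hsep a r hr hsub z hz
    have hza : z = a := Subsingleton.elim z a
    subst hza
    rw [torusIntegral_dim0]
    simp
  | succ d ih =>
    intro O hO f hcont hsep a r hr hsub z hz
    have hTI := torusIntegrable_kernel hcont hr hsub hz
    have hrec := torusIntegral_succ hTI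
    -- the inner integral evaluates via the induction hypothesis
    have hinner : ∀ x ∈ sphere (a 0) r,
        (torusIntegral (fun y => (∏ j, ((Fin.cons x y : Fin (d+1) → ℂ) j - z j))⁻¹ •
            f (Fin.cons x y)) (a ∘ Fin.succ) ((fun _ => r) ∘ Fin.succ))
        = (2 * π * Complex.I) ^ d •
            ((x - z 0)⁻¹ • f (Fin.cons x (z ∘ Fin.succ))) := by
      intro x hx
      have hxr : dist x (a 0) = r := mem_sphere.1 hx
      set O' : Set (Fin d → ℂ) := {y | Fin.cons x y ∈ O} with hO'def
      have hconsCont : Continuous (fun y : Fin d → ℂ => (Fin.cons x y : Fin (d+1) → ℂ)) :=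
        continuous_pi fun i => Fin.cases continuous_const (fun j => continuous_apply j) i
      have hO' : IsOpen O' := hO.preimage hconsCont
      have hcont' : ContinuousOn (fun y => f (Fin.cons x y)) O' :=
        hcont.comp hconsCont.continuousOn (fun y hy => hy)
      have hsep' : ∀ j : Fin d, ∀ y ∈ O',
          DifferentiableAt ℂ (fun w : ℂ => f (Fin.cons x (Function.update y j w))) (y j) := by
        intro j y hy
        have h := hsep j.succ _ hy
        simpa [Fin.cons_update] using h
      have hsub' : closedBall (a ∘ Fin.succ) r ⊆ O' := by
        intro y hy
        refine hsub ((dist_pi_le_iff hr.le).2 fun i => ?_)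
        induction i using Fin.cases with
        | zero => simpa using hxr.le
        | succ j =>
          simp only [Fin.cons_succ]
          exact (dist_le_pi_dist y (a ∘ Fin.succ) j).trans (mem_closedBall.1 hy)
      have hz' : z ∘ Fin.succ ∈ ball (a ∘ Fin.succ) r :=
        mem_ball.2 ((dist_pi_lt_iff hr).2 fun j =>
          lt_of_le_of_lt (dist_le_pi_dist z a j.succ) (mem_ball.1 hz))
      have hIH := ih O' hO' _ hcont' hsep' (a ∘ Fin.succ) r hr hsub' (z ∘ Fin.succ) hz'
      have hIH' : torusIntegral
          (fun y => (∏ j, (y j - (z ∘ Fin.succ) j))⁻¹ • f (Fin.cons x y))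
          (a ∘ Fin.succ) (fun _ => r)
          = (2 * π * Complex.I) ^ d • f (Fin.cons x (z ∘ Fin.succ)) := by
        rw [hIH, smul_inv_smul₀ (pow_ne_zero _ two_pi_I_ne_zero')]
      calc torusIntegral (fun y => (∏ j, ((Fin.cons x y : Fin (d+1) → ℂ) j - z j))⁻¹ •
              f (Fin.cons x y)) (a ∘ Fin.succ) ((fun _ => r) ∘ Fin.succ)
          = torusIntegral (fun y => (x - z 0)⁻¹ •
              ((∏ j, (y j - (z ∘ Fin.succ) j))⁻¹ • f (Fin.cons x y)))
              (a ∘ Fin.succ) (fun _ => r) := by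
            congr 1
            funext y
            rw [Fin.prod_univ_succ]
            simp only [Fin.cons_zero, Fin.cons_succ, Function.comp_apply, mul_inv, mul_smul]
        _ = (x - z 0)⁻¹ • torusIntegral
              (fun y => (∏ j, (y j - (z ∘ Fin.succ) j))⁻¹ • f (Fin.cons x y))
              (a ∘ Fin.succ) (fun _ => r) := torusIntegral_smul _ _ _ _
        _ = (x - z 0)⁻¹ • ((2 * π * Complex.I) ^ d • f (Fin.cons x (z ∘ Fin.succ))) := by
            rw [hIH']
        _ = (2 * π * Complex.I) ^ d • ((x - z 0)⁻¹ • f (Fin.cons x (z ∘ Fin.succ))) :=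
            smul_comm _ _ _
    -- the outer circle integral
    have hz0 : z 0 ∈ ball (a 0) r := mem_ball.2 (lt_of_le_of_lt (dist_le_pi_dist z a 0)
      (mem_ball.1 hz))
    have hconsCont0 : Continuous (fun x : ℂ => (Fin.cons x (z ∘ Fin.succ) : Fin (d+1) → ℂ)) :=
      continuous_pi fun i => Fin.cases continuous_id (fun j => continuous_const) i
    have hmaps0 : ∀ x ∈ closedBall (a 0) r,
        (Fin.cons x (z ∘ Fin.succ) : Fin (d+1) → ℂ) ∈ closedBall a r := by
      intro x hxm
      refine (dist_pi_le_iff hr.le).2 fun i => ?_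
      induction i using Fin.cases with
      | zero => simpa using mem_closedBall.1 hxm
      | succ j =>
        simp only [Fin.cons_succ]
        exact (lt_of_le_of_lt (dist_le_pi_dist z a j.succ) (mem_ball.1 hz)).le
    have hcont0 : ContinuousOn (fun x : ℂ => f (Fin.cons x (z ∘ Fin.succ)))
        (closedBall (a 0) r) :=
      hcont.comp hconsCont0.continuousOn (fun x hxm => hsub (hmaps0 x hxm))
    have hdiff0 : ∀ x ∈ ball (a 0) r \ (∅ : Set ℂ),
        DifferentiableAt ℂ (fun x : ℂ => f (Fin.cons x (z ∘ Fin.succ))) x := by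
      intro x hxm
      have hvO : (Fin.cons x (z ∘ Fin.succ) : Fin (d+1) → ℂ) ∈ O :=
        hsub (hmaps0 x (ball_subset_closedBall hxm.1))
      have h := hsep 0 _ hvO
      simpa [Fin.update_cons_zero] using h
    have hCauchy := Complex.circleIntegral_sub_inv_smul_of_differentiable_on_off_countable
      countable_empty hz0 hcont0 hdiff0
    have hcons : (Fin.cons (z 0) (z ∘ Fin.succ) : Fin (d+1) → ℂ) = z := Fin.cons_self_tail z
    have hmain : torusIntegral (fun w => (∏ j, (w j - z j))⁻¹ • f w) a (fun _ => r)
        = (2 * π * Complex.I) ^ (d + 1) • f z := by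
      calc torusIntegral (fun w => (∏ j, (w j - z j))⁻¹ • f w) a (fun _ => r)
          = ∮ x in C(a 0, r), torusIntegral
              (fun y => (∏ j, ((Fin.cons x y : Fin (d+1) → ℂ) j - z j))⁻¹ • f (Fin.cons x y))
              (a ∘ Fin.succ) ((fun _ => r) ∘ Fin.succ) := hrec
        _ = ∮ x in C(a 0, r), (2 * π * Complex.I) ^ d •
              ((x - z 0)⁻¹ • f (Fin.cons x (z ∘ Fin.succ))) :=
            circleIntegral.integral_congr hr.le (fun x hx => hinner x hx)
        _ = (2 * π * Complex.I) ^ d •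
              ∮ x in C(a 0, r), (x - z 0)⁻¹ • f (Fin.cons x (z ∘ Fin.succ)) :=
            circleIntegral.integral_smul _ _ _ _
        _ = (2 * π * Complex.I) ^ d • ((2 * π * Complex.I) • f z) := by
            rw [hCauchy, hcons]
        _ = (2 * π * Complex.I) ^ (d + 1) • f z := by
            rw [smul_smul, ← pow_succ]
    rw [hmain, inv_smul_smul₀ (pow_ne_zero _ two_pi_I_ne_zero')]

end OsgoodAux

/-- **(Osgood's lemma with Cauchy formula, vector valued.)** A continuous, separately
holomorphic function `f : O → E` on an open `O ⊆ ℂᵈ` is holomorphic, and on every closed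
polydisc contained in `O` the iterated Cauchy integral formula holds (expressed as a
torus integral). -/
theorem holomorphic_of_continuous_sep_holo_and_cauchy_formula
    {E : Type*} [NormedAddCommGroup E] [NormedSpace ℂ E] [CompleteSpace E]
    {d : ℕ} (O : Set (Fin d → ℂ)) (hO : IsOpen O)
    (f : (Fin d → ℂ) → E) (hcont : ContinuousOn f O)
    (hsep : ∀ j : Fin d, ∀ z ∈ O,
      DifferentiableAt ℂ (fun w : ℂ => f (Function.update z j w)) (z j)) :
    DifferentiableOn ℂ f O ∧
      ∀ (a : Fin d → ℂ) (r : ℝ), 0 < r →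
        {z : Fin d → ℂ | ∀ j, z j ∈ Metric.closedBall (a j) r} ⊆ O →
        ∀ z : Fin d → ℂ, (∀ j, dist (z j) (a j) < r) →
          f z = ((2 * π * Complex.I) ^ d)⁻¹ •
            torusIntegral (fun w => (∏ j, (w j - z j))⁻¹ • f w) a (fun _ => r) := by
  constructor
  · exact fun z hz =>
      (hasFDerivAt_of_sep hO hcont hsep hz).differentiableAt.differentiableWithinAt
  · intro a r hr hsub z hz
    have hsub' : Metric.closedBall a r ⊆ O := fun w hw =>
      hsub (fun j => Metric.mem_closedBall.2
        ((dist_le_pi_dist w a j).trans (Metric.mem_closedBall.1 hw)))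
    have hzm : z ∈ Metric.ball a r := Metric.mem_ball.2 ((dist_pi_lt_iff hr).2 hz)
    exact cauchy_polydisc d O hO f hcont hsep a r hr hsub' z hzm
end

section
/- Let O ⊆ ℂᵈ be open, E a complex Banach space, f ∈ H^∞(O; E), and φ a bp-continuous linear functional on H^∞(O). Then there is a unique element φ_f ∈ E such that ⟨φ_f, x'⟩ = φ(x' ∘ f) for all x' ∈ E'; moreover φ_f lies in the closed linear span of f(O). -/
open Filter

/-- a linear functional on functions is bp-continuous (relative to `H^∞(O)`):
whenever a uniformly bounded sequence of bounded holomorphic functions on `O`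
converges pointwise on `O` to a bounded holomorphic function, the values converge. -/
def BPContinuous {d : ℕ} (O : Set (Fin d → ℂ))
    (φ : ((Fin d → ℂ) → ℂ) →ₗ[ℂ] ℂ) : Prop :=
  ∀ (g : ℕ → (Fin d → ℂ) → ℂ) (g₀ : (Fin d → ℂ) → ℂ),
    (∀ n, DifferentiableOn ℂ (g n) O) → DifferentiableOn ℂ g₀ O →
    (∃ C, ∀ n, ∀ z ∈ O, ‖g n z‖ ≤ C) → (∃ C, ∀ z ∈ O, ‖g₀ z‖ ≤ C) →
    (∀ z ∈ O, Tendsto (fun n => g n z) atTop (nhds (g₀ z))) →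
    Tendsto (fun n => φ (g n)) atTop (nhds (φ g₀))


open NormedSpace TopologicalSpace

set_option maxHeartbeats 1000000

/-- A functional vanishing on a closed subspace, with value 1 at a point outside. -/
lemma exists_dual_vanishing {X : Type*} [NormedAddCommGroup X] [NormedSpace ℂ X]
    (p : Submodule ℂ X) (hp : IsClosed (p : Set X)) {x : X} (hx : x ∉ p) :
    ∃ Φ : X →L[ℂ] ℂ, (∀ v ∈ p, Φ v = 0) ∧ Φ x = 1 := by
  haveI : IsClosed (p : Set X) := hp
  have hne : (Submodule.Quotient.mk x : X ⧸ p) ≠ 0 := by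
    simpa [Submodule.Quotient.mk_eq_zero] using hx
  obtain ⟨g, hg1, hg2⟩ := exists_dual_vector ℂ (Submodule.Quotient.mk x : X ⧸ p) (norm_ne_zero_iff.2 hne)
  have hnorm : ‖(Submodule.Quotient.mk x : X ⧸ p)‖ ≠ 0 := by
    simpa using hne
  -- continuous quotient map
  let mkC : X →L[ℂ] X ⧸ p :=
    LinearMap.mkContinuous p.mkQ 1 (fun m => by
      simpa using Submodule.Quotient.norm_mk_le p m)
  refine ⟨((‖(Submodule.Quotient.mk x : X ⧸ p)‖ : ℂ)⁻¹) • (g.comp mkC), ?_, ?_⟩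
  · intro v hv
    have : (Submodule.Quotient.mk v : X ⧸ p) = 0 := (Submodule.Quotient.mk_eq_zero p).2 hv
    simp [mkC, ContinuousLinearMap.comp_apply, Submodule.mkQ_apply, this]
  · have : g (Submodule.Quotient.mk x : X ⧸ p) = (‖(Submodule.Quotient.mk x : X ⧸ p)‖ : ℂ) := hg2
    simp only [ContinuousLinearMap.smul_apply, ContinuousLinearMap.comp_apply]
    rw [show mkC x = (Submodule.Quotient.mk x : X ⧸ p) from rfl, this]
    rw [smul_eq_mul, inv_mul_cancel₀]
    exact_mod_cast hnorm

/-- For an `ℝ`-linear functional `c` on `ℂ`, `c z = (μ * z).re` with `μ = c 1 - c I * I`. -/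
lemma real_functional_eq (c : ℂ →L[ℝ] ℝ) (z : ℂ) :
    c z = (((c 1 : ℝ) - (c Complex.I : ℝ) * Complex.I) * z).re := by
  have hz : z = (z.re : ℝ) • (1 : ℂ) + (z.im : ℝ) • Complex.I := by
    simp [Complex.real_smul, Complex.ext_iff]
  rw [hz, map_add, map_smul, map_smul]
  simp [Complex.ext_iff, Complex.sub_re, Complex.mul_re, Complex.mul_im]
  ring

/-- **Helly / Goldstine-type approximation.** -/
lemma helly_approx {X : Type*} [NormedAddCommGroup X] [NormedSpace ℂ X]
    {n : ℕ} (w : Fin n → (X →L[ℂ] ℂ)) (Φ : (X →L[ℂ] ℂ) →L[ℂ] ℂ)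
    {ε : ℝ} (hε : 0 < ε) :
    ∃ u : X, ‖u‖ ≤ ‖Φ‖ + 1 ∧ ∀ i, ‖w i u - Φ (w i)‖ < ε := by
  classical
  set r : ℝ := ‖Φ‖ + 1 with hr
  have hrpos : 0 < r := by positivity
  set T : X →L[ℂ] (Fin n → ℂ) := ContinuousLinearMap.pi w with hT
  set c : Fin n → ℂ := fun i => Φ (w i) with hc
  have hmem : c ∈ closure (T '' Metric.closedBall (0 : X) r) := by
    by_contra hcm
    set s : Set (Fin n → ℂ) := closure (T '' Metric.closedBall (0 : X) r) with hs
    have hconv : Convex ℝ s := by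
      refine Convex.closure ?_
      have h := (convex_closedBall (0:X) r).linear_image
        ((T.restrictScalars ℝ : X →L[ℝ] (Fin n → ℂ)) : X →ₗ[ℝ] (Fin n → ℂ))
      simpa using h
    obtain ⟨L, ub, hL1, hL2⟩ := geometric_hahn_banach_closed_point hconv isClosed_closure hcm
    -- decompose L
    set μ : Fin n → ℂ := fun i =>
      ((L (Pi.single i 1) : ℝ) : ℂ) - ((L (Pi.single i Complex.I) : ℝ) : ℂ) * Complex.I with hμ
    have hsingle : ∀ (i : Fin n) (z : ℂ), L (Pi.single i z) = (μ i * z).re := by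
      intro i z
      have hz : (Pi.single i z : Fin n → ℂ) = z.re • (Pi.single i (1:ℂ) : Fin n → ℂ) + z.im • (Pi.single i Complex.I : Fin n → ℂ) := by
        rw [← Pi.single_smul, ← Pi.single_smul, ← Pi.single_add]
        congr 1
        simp [Complex.real_smul, Complex.ext_iff]
      rw [hz, map_add, map_smul, map_smul, hμ]
      simp only [smul_eq_mul, Complex.mul_re, Complex.sub_re, Complex.sub_im,
        Complex.ofReal_re, Complex.ofReal_im, Complex.mul_re, Complex.mul_im,
        Complex.I_re, Complex.I_im]
      ring
    have hLdec : ∀ t : Fin n → ℂ, L t = (∑ i, μ i * t i).re := by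
      intro t
      have ht : t = ∑ i, Pi.single i (t i) := by
        simp [Finset.univ_sum_single]
      conv_lhs => rw [ht]
      rw [map_sum, Complex.re_sum]
      exact Finset.sum_congr rfl fun i _ => hsingle i (t i)
    set W : X →L[ℂ] ℂ := ∑ i, μ i • w i with hW
    have hWapp : ∀ u : X, W u = ∑ i, μ i * w i u := by
      intro u; simp [hW]
    have hub0 : 0 < ub := by
      have h0 : (0 : Fin n → ℂ) ∈ s := by
        refine subset_closure ⟨0, by simpa using hrpos.le, by simp⟩
      have := hL1 0 h0
      simpa using this
    -- norm bound on W
    have hWb : ∀ u : X, ‖u‖ ≤ r → ‖W u‖ ≤ ub := by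
      intro u hu
      rcases eq_or_ne (W u) 0 with h | h
      · simp [h, hub0.le]
      · have hne : ((‖W u‖ : ℝ) : ℂ) ≠ 0 := by
          exact_mod_cast Complex.ofReal_ne_zero.2 (norm_ne_zero_iff.2 h)
        set θ : ℂ := (starRingEnd ℂ) (W u) / ‖W u‖ with hθ
        have hθn : ‖θ‖ = 1 := by
          rw [hθ, norm_div, RCLike.norm_conj]
          have h2 : ‖((‖W u‖ : ℝ) : ℂ)‖ = ‖W u‖ := by
            rw [Complex.norm_real, Real.norm_eq_abs, abs_of_nonneg (norm_nonneg _)]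
          rw [h2, div_self (norm_ne_zero_iff.2 h)]
        have hWθ : W (θ • u) = ((‖W u‖ : ℝ) : ℂ) := by
          rw [map_smul, smul_eq_mul, hθ, div_mul_eq_mul_div,
            ← Complex.normSq_eq_conj_mul_self, Complex.normSq_eq_norm_sq,
            sq, Complex.ofReal_mul, mul_div_assoc, div_self hne, mul_one]
        have hmem' : T (θ • u) ∈ s := by
          refine subset_closure ⟨θ • u, ?_, rfl⟩
          simp only [Metric.mem_closedBall, dist_zero_right, norm_smul, hθn, one_mul]
          exact hu
        have hlt := hL1 _ hmem'
        rw [hLdec] at hlt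
        have h2 : (∑ i, μ i * (T (θ • u)) i) = W (θ • u) := by
          rw [hWapp]
          exact Finset.sum_congr rfl fun i _ => by rw [hT]; rfl
        rw [h2, hWθ] at hlt
        simpa using hlt.le
    have hWnorm : r * ‖W‖ ≤ ub := by
      have hWub : ‖W‖ ≤ ub / r := by
        refine ContinuousLinearMap.opNorm_le_bound _ (by positivity) fun v => ?_
        rcases eq_or_ne v 0 with rfl | hv
        · simp
        · have hnv : (0:ℝ) < ‖v‖ := norm_pos_iff.2 hv
          have hb : ‖W (((r / ‖v‖ : ℝ) : ℂ) • v)‖ ≤ ub := by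
            refine hWb _ ?_
            rw [norm_smul, Complex.norm_real, Real.norm_eq_abs,
              abs_of_nonneg (by positivity), div_mul_cancel₀ _ hnv.ne']
          rw [map_smul, norm_smul, Complex.norm_real, Real.norm_eq_abs,
            abs_of_nonneg (by positivity : (0:ℝ) ≤ r / ‖v‖)] at hb
          rw [div_mul_eq_mul_div, div_le_iff₀ hnv] at hb
          rw [div_mul_eq_mul_div, le_div_iff₀ hrpos]
          nlinarith
      calc r * ‖W‖ ≤ r * (ub / r) := by nlinarith [norm_nonneg W]
      _ = ub := by field_simp
    -- contradiction
    have hΦW : Φ W = ∑ i, μ i * c i := by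
      rw [hW, map_sum]
      exact Finset.sum_congr rfl fun i _ => by rw [map_smul, smul_eq_mul, hc]
    have hLc : L c = (Φ W).re := by rw [hLdec, hΦW]
    have h3 : (Φ W).re ≤ ‖Φ‖ * ‖W‖ := by
      calc (Φ W).re ≤ ‖Φ W‖ := Complex.re_le_norm _
      _ ≤ ‖Φ‖ * ‖W‖ := Φ.le_opNorm W
    have h4 := hL2
    rw [hLc] at h4
    nlinarith [norm_nonneg W]
  rw [Metric.mem_closure_iff] at hmem
  obtain ⟨b, ⟨u, hu, rfl⟩, hb⟩ := hmem ε hε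
  refine ⟨u, by simpa [dist_zero_right] using Metric.mem_closedBall.1 hu, fun i => ?_⟩
  have h5 : dist (c i) (T u i) < ε := lt_of_le_of_lt (dist_le_pi_dist c (T u) i) hb
  rw [dist_comm] at h5
  rw [show (T u) i = w i u from rfl, hc, dist_eq_norm] at h5
  exact h5

/-- **(Linearization theorem.)** Let `O ⊆ ℂᵈ` be open, `E` a complex Banach space,
`f ∈ H^∞(O;E)` and `φ` a bp-continuous linear functional on `H^∞(O)`. Then there is a
unique `y ∈ E` with `⟨y, x'⟩ = φ(x' ∘ f)` for all `x' ∈ E'`; moreover `y` lies in the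
closed linear span of `f(O)`. -/
theorem linearization_theorem
    {E : Type*} [NormedAddCommGroup E] [NormedSpace ℂ E] [CompleteSpace E]
    {d : ℕ} (O : Set (Fin d → ℂ)) (hO : IsOpen O) (hOne : O.Nonempty)
    (f : (Fin d → ℂ) → E) (hf : DifferentiableOn ℂ f O)
    (hfb : ∃ C, ∀ z ∈ O, ‖f z‖ ≤ C)
    (φ : ((Fin d → ℂ) → ℂ) →ₗ[ℂ] ℂ) (hφ : BPContinuous O φ) :
    ∃ y : E, (∀ x' : E →L[ℂ] ℂ, x' y = φ (fun z => x' (f z))) ∧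
      y ∈ closure (Submodule.span ℂ (f '' O) : Set E) ∧
      ∀ y' : E, (∀ x' : E →L[ℂ] ℂ, x' y' = φ (fun z => x' (f z))) → y' = y := by
  classical
  obtain ⟨C₀, hC₀⟩ := hfb
  set C : ℝ := max C₀ 0 with hCdef
  have hC : ∀ z ∈ O, ‖f z‖ ≤ C := fun z hz => (hC₀ z hz).trans (le_max_left _ _)
  have hC0 : 0 ≤ C := le_max_right _ _
  set G : Submodule ℂ E := (Submodule.span ℂ (f '' O)).topologicalClosure with hG
  have hGset : (G : Set E) = closure (Submodule.span ℂ (f '' O) : Set E) :=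
    Submodule.topologicalClosure_coe _
  have hGclosed : IsClosed (G : Set E) := Submodule.isClosed_topologicalClosure _
  haveI : CompleteSpace G := IsClosed.completeSpace_coe (hs := hGclosed)
  have hmemG : ∀ z ∈ O, f z ∈ G := fun z hz =>
    Submodule.le_topologicalClosure _ (Submodule.subset_span ⟨z, hz, rfl⟩)
  -- norm-preserving extensions of functionals on G
  have hext0 : ∀ u : StrongDual ℂ ↥G, ∃ v : StrongDual ℂ E, (∀ x : ↥G, v x = u x) ∧ ‖v‖ = ‖u‖ :=
    fun u => exists_extension_norm_eq G u
  choose ext hext1 hext2 using hext0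
  have hdiff : ∀ x' : StrongDual ℂ E, DifferentiableOn ℂ (fun z => x' (f z)) O :=
    fun x' => x'.differentiable.comp_differentiableOn hf
  have hbdd : ∀ x' : StrongDual ℂ E, ∃ B, ∀ z ∈ O, ‖x' (f z)‖ ≤ B := fun x' =>
    ⟨‖x'‖ * C, fun z hz => (x'.le_opNorm _).trans
      (mul_le_mul_of_nonneg_left (hC z hz) (norm_nonneg x'))⟩
  -- φ only depends on values on O (for bounded holomorphic functions)
  have key0 : ∀ g h : (Fin d → ℂ) → ℂ, DifferentiableOn ℂ g O → DifferentiableOn ℂ h O →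
      (∃ B, ∀ z ∈ O, ‖g z‖ ≤ B) → (∃ B, ∀ z ∈ O, ‖h z‖ ≤ B) → (∀ z ∈ O, g z = h z) →
      φ g = φ h := by
    intro g h hg hh hgb hhb hgh
    have := hφ (fun _ => g) h (fun _ => hg) hh (hgb.imp fun B hB => fun _ => hB) hhb
      (fun z hz => by
        show Tendsto (fun _ : ℕ => g z) atTop (nhds (h z))
        rw [hgh z hz]
        exact tendsto_const_nhds)
    exact tendsto_nhds_unique tendsto_const_nhds this
  set Λraw : StrongDual ℂ ↥G → ℂ := fun u => φ (fun z => ext u (f z)) with hΛrawdef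
  have hextf : ∀ (u : StrongDual ℂ ↥G) (z : Fin d → ℂ) (hz : z ∈ O),
      ext u (f z) = u ⟨f z, hmemG z hz⟩ := fun u z hz => hext1 u ⟨f z, hmemG z hz⟩
  have hΛadd : ∀ u v : StrongDual ℂ ↥G, Λraw (u + v) = Λraw u + Λraw v := by
    intro u v
    have h1 : φ (fun z => ext (u + v) (f z)) = φ (fun z => ext u (f z) + ext v (f z)) := by
      refine key0 _ _ (hdiff _) ((hdiff (ext u)).add (hdiff (ext v))) (hbdd _) ?_ ?_
      · obtain ⟨B1, hB1⟩ := hbdd (ext u); obtain ⟨B2, hB2⟩ := hbdd (ext v)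
        exact ⟨B1 + B2, fun z hz => (norm_add_le _ _).trans (add_le_add (hB1 z hz) (hB2 z hz))⟩
      · intro z hz
        rw [hextf (u + v) z hz, hextf u z hz, hextf v z hz]
        exact ContinuousLinearMap.add_apply u v _
    exact h1.trans (map_add φ (fun z => ext u (f z)) (fun z => ext v (f z)))
  have hΛsmul : ∀ (c : ℂ) (u : StrongDual ℂ ↥G), Λraw (c • u) = c * Λraw u := by
    intro c u
    have h1 : φ (fun z => ext (c • u) (f z)) = φ (fun z => c • ext u (f z)) := by
      refine key0 _ _ (hdiff _) ((hdiff (ext u)).const_smul c) (hbdd _) ?_ ?_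
      · obtain ⟨B1, hB1⟩ := hbdd (ext u)
        exact ⟨‖c‖ * B1, fun z hz => by
          rw [norm_smul]
          exact mul_le_mul_of_nonneg_left (hB1 z hz) (norm_nonneg c)⟩
      · intro z hz
        rw [hextf (c • u) z hz, hextf u z hz]
        rfl
    show φ (fun z => ext (c • u) (f z)) = c * φ (fun z => ext u (f z))
    exact h1.trans (map_smul φ c fun z => ext u (f z))
  set Λlin : StrongDual ℂ ↥G →ₗ[ℂ] ℂ :=
    { toFun := Λraw, map_add' := hΛadd, map_smul' := hΛsmul } with hΛlin
  -- key sequential continuity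
  have keyseq : ∀ (u : ℕ → StrongDual ℂ ↥G) (M : ℝ), (∀ n, ‖u n‖ ≤ M) →
      (∀ g : ↥G, Tendsto (fun n => u n g) atTop (nhds 0)) →
      Tendsto (fun n => Λraw (u n)) atTop (nhds 0) := by
    intro u M hM hpt
    have h0 : φ (fun _ => (0 : ℂ)) = 0 := map_zero φ
    have := hφ (fun n z => ext (u n) (f z)) (fun _ => 0)
      (fun n => hdiff _) (differentiableOn_const 0)
      ⟨M * C, fun n z hz => by
        calc ‖ext (u n) (f z)‖ ≤ ‖ext (u n)‖ * ‖f z‖ := ContinuousLinearMap.le_opNorm _ _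
        _ ≤ M * C := by
            rw [hext2]
            exact mul_le_mul (hM n) (hC z hz) (norm_nonneg _)
              ((norm_nonneg (u 0)).trans (hM 0))⟩
      ⟨0, fun z _ => by simp⟩
      (fun z hz => by
        simp only [hextf _ z hz]
        exact hpt ⟨f z, hmemG z hz⟩)
    rw [h0] at this
    exact this
  -- Λ is bounded
  have hΛbdd : ∃ Mb, ∀ u, ‖Λlin u‖ ≤ Mb * ‖u‖ := by
    by_contra hcon
    push_neg at hcon
    choose u hu using fun n : ℕ => hcon ((2 : ℝ) ^ n)
    have hun0 : ∀ n, u n ≠ 0 := by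
      intro n h
      have := hu n
      rw [h] at this
      simp [ContinuousLinearMap.opNorm_zero] at this
    set v : ℕ → StrongDual ℂ ↥G := fun n => (((2 ^ n * ‖u n‖ : ℝ) : ℂ))⁻¹ • u n with hv
    have hpos : ∀ n, (0 : ℝ) < 2 ^ n * ‖u n‖ := fun n => by
      have := norm_pos_iff (E := StrongDual ℂ ↥G) |>.2 (hun0 n); positivity
    haveI : NormSMulClass ℂ (StrongDual ℂ ↥G) := @NormedSpace.toNormSMulClass ℂ (StrongDual ℂ ↥G) _ _ _
    have hvnorm : ∀ n, ‖v n‖ = ((2 : ℝ) ^ n)⁻¹ := by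
      intro n
      rw [hv]
      simp only [norm_smul, norm_inv, Complex.norm_real, Real.norm_eq_abs,
        abs_of_pos (hpos n)]
      field_simp
      exact div_self (norm_pos_iff (E := StrongDual ℂ ↥G) |>.2 (hun0 n)).ne'
    have hvle : ∀ n, ‖v n‖ ≤ 1 := by
      intro n
      rw [hvnorm]
      rw [inv_le_one_iff₀]
      right
      exact one_le_pow₀ (by norm_num)
    have hvpt : ∀ g : ↥G, Tendsto (fun n => v n g) atTop (nhds 0) := by
      intro g
      have hb : ∀ n, ‖v n g‖ ≤ ((2 : ℝ)⁻¹) ^ n * ‖g‖ := by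
        intro n
        calc ‖v n g‖ ≤ ‖v n‖ * ‖g‖ := (v n).le_opNorm g
          _ = ((2 : ℝ)⁻¹) ^ n * ‖g‖ := by rw [hvnorm, inv_pow]
      refine squeeze_zero_norm hb ?_
      have h2 : Tendsto (fun n : ℕ => ((2 : ℝ)⁻¹) ^ n) atTop (nhds 0) :=
        tendsto_pow_atTop_nhds_zero_of_lt_one (by norm_num) (by norm_num)
      simpa using h2.mul_const ‖g‖
    have hto0 := keyseq v 1 hvle hvpt
    have hbig : ∀ n, 1 < ‖Λraw (v n)‖ := by
      intro n
      have h1 : Λraw (v n) = (((2 ^ n * ‖u n‖ : ℝ) : ℂ))⁻¹ * Λraw (u n) := by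
        rw [hv]; exact hΛsmul _ _
      rw [h1, norm_mul, norm_inv, Complex.norm_real, Real.norm_eq_abs, abs_of_pos (hpos n)]
      have h2 : (2 ^ n * ‖u n‖)⁻¹ * (2 ^ n * ‖u n‖) < (2 ^ n * ‖u n‖)⁻¹ * ‖Λraw (u n)‖ :=
        mul_lt_mul_of_pos_left (hu n) (inv_pos.2 (hpos n))
      rw [inv_mul_cancel₀ (hpos n).ne'] at h2
      exact h2
    have hev : ∀ᶠ n in atTop, ‖Λraw (v n)‖ < 1 := by
      have hn := hto0.norm
      rw [norm_zero] at hn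
      exact hn.eventually_lt_const one_pos
    obtain ⟨n, hn1⟩ := hev.exists
    exact absurd (hbig n) (not_lt.2 hn1.le)
  set Λ : StrongDual ℂ ↥G →L[ℂ] ℂ := LinearMap.mkContinuousOfExistsBound (E := StrongDual ℂ ↥G) Λlin hΛbdd with hΛ
  have hΛapp : ∀ u, Λ u = Λraw u := fun u => rfl
  letI i1 : NormedAddCommGroup (StrongDual ℂ (StrongDual ℂ ↥G)) := by
    exact ContinuousLinearMap.toNormedAddCommGroup (E := StrongDual ℂ ↥G) (F := ℂ) (σ₁₂ := RingHom.id ℂ)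
  letI i2 : NormedSpace ℂ (StrongDual ℂ (StrongDual ℂ ↥G)) := by
    exact ContinuousLinearMap.toNormedSpace (E := StrongDual ℂ ↥G) (F := ℂ) (σ₁₂ := RingHom.id ℂ)
  set J : ↥G →L[ℂ] StrongDual ℂ (StrongDual ℂ ↥G) := inclusionInDoubleDual ℂ ↥G with hJ
  set p : Submodule ℂ (StrongDual ℂ (StrongDual ℂ ↥G)) := LinearMap.range (J : ↥G →ₗ[ℂ] StrongDual ℂ (StrongDual ℂ ↥G)) with hp
  have hpcl : IsClosed (p : Set (StrongDual ℂ (StrongDual ℂ ↥G))) := by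
    have h1 : (p : Set (StrongDual ℂ (StrongDual ℂ ↥G))) = Set.range J := by
      ext v
      simp [hp, LinearMap.mem_range]
    rw [h1]
    have h2 : Isometry (J : ↥G → StrongDual ℂ (StrongDual ℂ ↥G)) :=
      (inclusionInDoubleDualLi ℂ (E := ↥G)).isometry
    exact h2.isClosedEmbedding.isClosed_range
  have hmain : Λ ∈ p := by
    by_contra hΛp
    obtain ⟨Φ, hΦ0, hΦΛ⟩ := exists_dual_vanishing (X := StrongDual ℂ (StrongDual ℂ ↥G)) p hpcl hΛp
    -- separability of G
    have hOsep : IsSeparable O := IsSeparable.of_separableSpace O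
    haveI : SeparableSpace ↥O := hOsep.separableSpace
    have hsep1 : IsSeparable (f '' O) := by
      rw [Set.image_eq_range]
      exact isSeparable_range (ContinuousOn.restrict hf.continuousOn)
    have hsep2 : IsSeparable (G : Set E) := by
      rw [hGset]
      exact hsep1.span.closure
    haveI : SeparableSpace ↥G := hsep2.separableSpace
    haveI : Nonempty ↥G := ⟨0⟩
    obtain ⟨gs, hgs⟩ := TopologicalSpace.exists_dense_seq ↥G
    have happrox : ∀ n : ℕ, ∃ u : StrongDual ℂ ↥G, ‖u‖ ≤ ‖Φ‖ + 1 ∧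
        ‖Λ u - 1‖ < 1 / (n + 1) ∧ ∀ j : Fin n, ‖u (gs j)‖ < 1 / (n + 1) := by
      intro n
      obtain ⟨u, hu1, hu2⟩ := helly_approx (X := StrongDual ℂ ↥G)
        (Fin.cons Λ (fun j : Fin n => J (gs j)) : Fin (n + 1) → (StrongDual ℂ ↥G →L[ℂ] ℂ))
        Φ (show (0:ℝ) < 1 / (n + 1) by positivity)
      refine ⟨u, hu1, ?_, ?_⟩
      · have h3 := hu2 0
        rw [Fin.cons_zero, hΦΛ] at h3
        exact h3
      · intro j
        have h3 := hu2 j.succ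
        rw [Fin.cons_succ] at h3
        have hz : Φ (J (gs j)) = 0 := hΦ0 _ (LinearMap.mem_range.2 ⟨gs j, rfl⟩)
        rw [hz, sub_zero] at h3
        have h4 : (J (gs j)) u = u (gs j) := rfl
        rw [h4] at h3
        exact h3
    choose u hu1 hu2 hu3 using happrox
    have hpt : ∀ g : ↥G, Tendsto (fun n => u n g) atTop (nhds 0) := by
      intro g
      rw [Metric.tendsto_atTop]
      intro ε hε
      set M : ℝ := ‖Φ‖ + 1 with hM
      have hMpos : 0 < M := by positivity
      obtain ⟨j, hj⟩ := hgs.exists_dist_lt g (show (0:ℝ) < ε / (2 * M) by positivity)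
      obtain ⟨N, hN⟩ : ∃ N : ℕ, (1 : ℝ) / (N + 1) < ε / 2 :=
        exists_nat_one_div_lt (by positivity)
      refine ⟨max (j + 1) N, fun n hn => ?_⟩
      have hjn : j < n := lt_of_lt_of_le (Nat.lt_succ_self j)
        (le_trans (le_max_left _ _) hn)
      have hNn : (1 : ℝ) / (n + 1) ≤ 1 / (N + 1) := by
        apply one_div_le_one_div_of_le (by positivity)
        have : N ≤ n := le_trans (le_max_right _ _) hn
        exact_mod_cast Nat.succ_le_succ this
      rw [dist_zero_right]
      have h5 := hu3 n ⟨j, hjn⟩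
      have heq : gs j + (g - gs j) = g := by abel
      have hdist : ‖g - gs j‖ < ε / (2 * M) := by rw [← dist_eq_norm]; exact hj
      have h6 : (1 : ℝ) / (n + 1) < ε / 2 := lt_of_le_of_lt hNn hN
      calc ‖u n g‖ = ‖u n (gs j) + u n (g - gs j)‖ := by rw [← map_add, heq]
        _ ≤ ‖u n (gs j)‖ + ‖u n (g - gs j)‖ := norm_add_le _ _
        _ ≤ 1 / (n + 1) + M * ‖g - gs j‖ := by
            refine add_le_add h5.le ?_
            exact ((u n).le_opNorm _).trans
              (mul_le_mul_of_nonneg_right (hu1 n) (norm_nonneg _))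
        _ < ε / 2 + M * (ε / (2 * M)) := by
            refine add_lt_add_of_lt_of_le h6 ?_
            exact (mul_le_mul_of_nonneg_left hdist.le hMpos.le)
        _ = ε := by field_simp; ring
    have h7 := keyseq u (‖Φ‖ + 1) hu1 hpt
    have h8 : Tendsto (fun n => Λ (u n)) atTop (nhds 1) := by
      rw [tendsto_iff_norm_sub_tendsto_zero]
      refine squeeze_zero (fun n => norm_nonneg _) (fun n => (hu2 n).le) ?_
      exact tendsto_one_div_add_atTop_nhds_zero_nat
    have h9 : Tendsto (fun n => Λ (u n)) atTop (nhds 0) := h7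
    exact one_ne_zero (tendsto_nhds_unique h8 h9)
  obtain ⟨y₀, hy₀⟩ := LinearMap.mem_range.1 hmain
  have hprop : ∀ x' : E →L[ℂ] ℂ, x' (y₀ : E) = φ (fun z => x' (f z)) := by
    intro x'
    set uu : StrongDual ℂ ↥G := x'.comp G.subtypeL with huu
    have h1 : Λ uu = uu y₀ := by rw [← hy₀]; rfl
    have h2 : uu y₀ = x' (y₀ : E) := rfl
    have h3 : Λ uu = φ (fun z => x' (f z)) := by
      rw [hΛapp]
      refine key0 _ _ (hdiff _) (hdiff x') (hbdd _) (hbdd x') ?_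
      intro z hz
      rw [hextf uu z hz]
      rfl
    rw [← h2, ← h1, h3]
  refine ⟨(y₀ : E), hprop, ?_, ?_⟩
  · rw [← hGset]
    exact y₀.2
  · intro y' hy'
    apply (NormedSpace.eq_iff_forall_dual_eq ℂ).2
    intro g
    rw [hy' g, hprop g]
end

section
/- Let Ω be a set, E a closed subspace of ℓ^∞(Ω), O ⊆ ℂᵈ open, f : O × Ω → ℂ bounded with f(z,·) ∈ E for all z and f(·,t) holomorphic for all t, and φ a bp-continuous linear functional on H^∞(O). Then the function t ↦ φ(f(·,t)) belongs to the closed linear span of {f(z,·) : z ∈ O} in E, and for every μ ∈ E' one has μ(t ↦ φ(f(·,t))) = φ(z ↦ μ(f(z,·))). -/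
open ENNReal Filter

set_option synthInstance.maxHeartbeats 1000000
set_option maxHeartbeats 1000000

namespace AbstractFubiniAux

open Metric Set

theorem phi_congr {d : ℕ} {O : Set (Fin d → ℂ)} {φ : ((Fin d → ℂ) → ℂ) →ₗ[ℂ] ℂ}
    (hφ : BPContinuous O φ) {g h : (Fin d → ℂ) → ℂ}
    (hg : DifferentiableOn ℂ g O) (hh : DifferentiableOn ℂ h O)
    (hgb : ∃ C, ∀ z ∈ O, ‖g z‖ ≤ C) (hhb : ∃ C, ∀ z ∈ O, ‖h z‖ ≤ C)
    (heq : ∀ z ∈ O, g z = h z) : φ g = φ h := by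
  obtain ⟨C, hC⟩ := hgb
  have h1 : Tendsto (fun _ : ℕ => φ g) atTop (nhds (φ h)) :=
    hφ (fun _ => g) h (fun _ => hg) hh ⟨C, fun _ => hC⟩ hhb
      (fun z hz => heq z hz ▸ tendsto_const_nhds)
  exact (tendsto_nhds_unique h1 tendsto_const_nhds).symm

theorem phi_bound {d : ℕ} {O : Set (Fin d → ℂ)} {φ : ((Fin d → ℂ) → ℂ) →ₗ[ℂ] ℂ}
    (hφ : BPContinuous O φ) :
    ∃ M : ℝ, 0 ≤ M ∧ ∀ g : (Fin d → ℂ) → ℂ, DifferentiableOn ℂ g O →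
      ∀ c : ℝ, 0 ≤ c → (∀ z ∈ O, ‖g z‖ ≤ c) → ‖φ g‖ ≤ M * c := by
  -- step 1: uniform bound on the unit ball
  have key : ∃ M : ℝ, ∀ g : (Fin d → ℂ) → ℂ, DifferentiableOn ℂ g O →
      (∀ z ∈ O, ‖g z‖ ≤ 1) → ‖φ g‖ ≤ M := by
    by_contra hcon
    push_neg at hcon
    choose g hgd hgb hgφ using fun n : ℕ => hcon ((n + 1 : ℝ) * (n + 1 : ℝ))
    set h : ℕ → (Fin d → ℂ) → ℂ := fun n => ((n : ℂ) + 1)⁻¹ • g n with hh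
    have hn0 : ∀ n : ℕ, ((n : ℂ) + 1) ≠ 0 := fun n => Nat.cast_add_one_ne_zero n
    have hnormn : ∀ n : ℕ, ‖((n : ℂ) + 1)⁻¹‖ = ((n : ℝ) + 1)⁻¹ := by
      intro n
      rw [norm_inv]
      norm_cast
    have htend : Tendsto (fun n => φ (h n)) atTop (nhds (φ 0)) := by
      apply hφ
      · intro n
        exact DifferentiableOn.congr ((hgd n).const_smul (((n : ℂ) + 1)⁻¹))
          (fun z _ => rfl)
      · exact differentiableOn_const 0
      · refine ⟨1, fun n z hz => ?_⟩
        rw [hh]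
        simp only [Pi.smul_apply, norm_smul, hnormn]
        calc ((n : ℝ) + 1)⁻¹ * ‖g n z‖ ≤ 1 * 1 := by
              apply mul_le_mul _ (hgb n z hz) (norm_nonneg _) zero_le_one
              rw [inv_le_one_iff₀]; right; linarith [Nat.cast_nonneg (α := ℝ) n]
          _ = 1 := one_mul 1
      · exact ⟨1, fun z hz => by simp⟩
      · intro z hz
        have : Tendsto (fun n : ℕ => ((n : ℝ) + 1)⁻¹) atTop (nhds 0) := by
          simpa using tendsto_one_div_add_atTop_nhds_zero_nat (𝕜 := ℝ)
        simp only [Pi.zero_apply]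
        apply squeeze_zero_norm _ this
        intro n
        rw [hh]
        simp only [Pi.smul_apply, norm_smul, hnormn]
        calc ((n : ℝ) + 1)⁻¹ * ‖g n z‖ ≤ ((n : ℝ) + 1)⁻¹ * 1 := by
              apply mul_le_mul_of_nonneg_left (hgb n z hz) (by positivity)
          _ = ((n : ℝ) + 1)⁻¹ := mul_one _
    rw [map_zero] at htend
    have htend' : Tendsto (fun n => ‖φ (h n)‖) atTop (nhds 0) := by
      simpa using htend.norm
    have hev : ∀ᶠ n : ℕ in atTop, ‖φ (h n)‖ < 1 :=
      htend'.eventually (eventually_lt_nhds zero_lt_one)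
    obtain ⟨n, hn⟩ := hev.exists
    have : ‖φ (h n)‖ = ((n : ℝ) + 1)⁻¹ * ‖φ (g n)‖ := by
      rw [hh]; simp only [map_smul, smul_eq_mul, norm_mul, hnormn]
    rw [this] at hn
    have hlow := hgφ n
    have hpos : (0 : ℝ) < (n : ℝ) + 1 := by positivity
    rw [inv_mul_lt_iff₀ hpos, mul_one] at hn
    nlinarith
  obtain ⟨M, hM⟩ := key
  refine ⟨max M 0, le_max_right _ _, ?_⟩
  intro g hgd c hc hgb
  rcases eq_or_lt_of_le hc with hc0 | hc0
  · -- c = 0 : g vanishes on O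
    have : φ g = φ 0 := by
      apply phi_congr hφ hgd (differentiableOn_const 0) ⟨c, hgb⟩ ⟨0, by simp⟩
      intro z hz
      have := hgb z hz
      rw [← hc0] at this
      simpa using le_antisymm this (norm_nonneg _)
    rw [this, map_zero, norm_zero]
    rw [← hc0, mul_zero]
  · have hcc : (c : ℂ) ≠ 0 := by
      simpa using ne_of_gt hc0
    set g' : (Fin d → ℂ) → ℂ := fun z => (c : ℂ)⁻¹ * g z with hg'
    have hgd' : DifferentiableOn ℂ g' O := (differentiableOn_const _).mul hgd
    have hnc : ‖(c : ℂ)‖ = c := by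
      rw [Complex.norm_real, Real.norm_eq_abs, abs_of_pos hc0]
    have hb' : ∀ z ∈ O, ‖g' z‖ ≤ 1 := by
      intro z hz
      rw [hg', norm_mul, norm_inv, hnc, inv_mul_le_iff₀ hc0, mul_one]
      exact hgb z hz
    have h1 : ‖φ g'‖ ≤ M := hM _ hgd' hb'
    have h2 : φ g = (c : ℂ) * φ g' := by
      have hge : g = (c : ℂ) • g' := by
        funext z
        simp only [Pi.smul_apply, hg', smul_eq_mul]
        field_simp
      rw [hge, map_smul, smul_eq_mul]
    rw [h2, norm_mul, hnc]
    calc c * ‖φ g'‖ ≤ c * M := by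
          exact mul_le_mul_of_nonneg_left h1 hc
      _ ≤ max M 0 * c := by
          rw [mul_comm]
          exact mul_le_mul_of_nonneg_right (le_max_left _ _) hc



theorem Fl_differentiableOn {d : ℕ} {O : Set (Fin d → ℂ)} (hO : IsOpen O)
    {Ω : Type*} (f : (Fin d → ℂ) → Ω → ℂ) {C : ℝ} (hC : 0 ≤ C)
    (hbdd : ∀ z ∈ O, ∀ t, ‖f z t‖ ≤ C)
    (Fl : (Fin d → ℂ) → lp (fun _ : Ω => ℂ) ∞)
    (hF : ∀ z ∈ O, ∀ t, (Fl z : ∀ _ : Ω, ℂ) t = f z t)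
    (hholo : ∀ t, DifferentiableOn ℂ (fun z => f z t) O) :
    DifferentiableOn ℂ Fl O := by
  intro z₀ hz₀
  obtain ⟨R, hR, hball⟩ := Metric.isOpen_iff.1 hO z₀ hz₀
  have hR0 : R ≠ 0 := ne_of_gt hR
  have hdiff : ∀ t, ∀ z ∈ O, DifferentiableAt ℂ (fun z => f z t) z :=
    fun t z hz => (hholo t).differentiableAt (hO.mem_nhds hz)
  set D : Ω → (Fin d → ℂ) →L[ℂ] ℂ := fun t => fderiv ℂ (fun z => f z t) z₀ with hDdef
  have hD : ∀ t, HasFDerivAt (fun z => f z t) (D t) z₀ :=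
    fun t => (hdiff t z₀ hz₀).hasFDerivAt
  -- affine slices
  have haff : ∀ (v : Fin d → ℂ) (ζ : ℂ), HasDerivAt (fun ζ : ℂ => z₀ + ζ • v) v ζ := by
    intro v ζ
    simpa using ((hasDerivAt_id ζ).smul_const v).const_add z₀
  have hmem : ∀ (v : Fin d → ℂ), v ≠ 0 → ∀ ζ : ℂ, ζ ∈ ball (0 : ℂ) (R / ‖v‖) →
      z₀ + ζ • v ∈ O := by
    intro v hv ζ hζ
    apply hball
    rw [mem_ball_zero_iff] at hζ
    rw [mem_ball, dist_eq_norm]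
    have : z₀ + ζ • v - z₀ = ζ • v := by ring_nf
    rw [this, norm_smul]
    calc ‖ζ‖ * ‖v‖ < R / ‖v‖ * ‖v‖ := by
          exact mul_lt_mul_of_pos_right hζ (norm_pos_iff.2 hv)
      _ = R := div_mul_cancel₀ R (ne_of_gt (norm_pos_iff.2 hv))
  -- slice derivative
  have hψ0 : ∀ (v : Fin d → ℂ) (t : Ω),
      HasDerivAt (fun ζ : ℂ => f (z₀ + ζ • v) t) (D t v) 0 := by
    intro v t
    have h1 : HasFDerivAt (fun z => f z t) (D t) (z₀ + (0 : ℂ) • v) := by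
      simpa using hD t
    exact h1.comp_hasDerivAt 0 (haff v 0)
  -- uniform bound on the derivatives
  have Dbound : ∀ t v, ‖D t v‖ ≤ (2 * C + 1) / R * ‖v‖ := by
    intro t v
    rcases eq_or_ne v 0 with rfl | hv
    · simp
    have hv' : 0 < ‖v‖ := norm_pos_iff.2 hv
    have hρ : 0 < R / ‖v‖ := by positivity
    set ψ : ℂ → ℂ := fun ζ => f (z₀ + ζ • v) t with hψdef
    have hψd : DifferentiableOn ℂ ψ (ball 0 (R / ‖v‖)) := by
      intro ζ hζ
      exact ((hdiff t _ (hmem v hv ζ hζ)).comp ζ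
        (haff v ζ).differentiableAt).differentiableWithinAt
    have maps : MapsTo ψ (ball 0 (R / ‖v‖)) (ball (ψ 0) (2 * C + 1)) := by
      intro ζ hζ
      rw [mem_ball, dist_eq_norm]
      have h0m : z₀ + (0 : ℂ) • v ∈ O := by
        simpa using hz₀
      calc ‖ψ ζ - ψ 0‖ ≤ ‖ψ ζ‖ + ‖ψ 0‖ := norm_sub_le _ _
        _ ≤ C + C := add_le_add (hbdd _ (hmem v hv ζ hζ) t) (hbdd _ h0m t)
        _ < 2 * C + 1 := by linarith
    have schwarz := Complex.norm_deriv_le_div_of_mapsTo_ball hψd (maps.mono_right ball_subset_closedBall) hρ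
    rw [(hψ0 v t).deriv] at schwarz
    calc ‖D t v‖ ≤ (2 * C + 1) / (R / ‖v‖) := schwarz
      _ = (2 * C + 1) / R * ‖v‖ := by
          field_simp
  -- the candidate derivative
  have hmemD : ∀ v, Memℓp (fun t => D t v) ∞ := by
    intro v
    apply memℓp_infty
    refine ⟨(2 * C + 1) / R * ‖v‖, ?_⟩
    rintro x ⟨t, rfl⟩
    exact Dbound t v
  set L : (Fin d → ℂ) →L[ℂ] lp (fun _ : Ω => ℂ) ∞ :=
    LinearMap.mkContinuous
      { toFun := fun v => (⟨fun t => D t v, hmemD v⟩ : lp (fun _ : Ω => ℂ) ∞)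
        map_add' := fun v w => by
          apply lp.ext
          rw [lp.coeFn_add]
          funext t
          exact (D t).map_add v w
        map_smul' := fun a v => by
          apply lp.ext
          rw [lp.coeFn_smul]
          funext t
          exact (D t).map_smul a v }
      ((2 * C + 1) / R)
      (fun v => lp.norm_le_of_forall_le (by positivity) (fun t => Dbound t v)) with hLdef
  have hLapp : ∀ (v : Fin d → ℂ) (t : Ω), (L v : ∀ _ : Ω, ℂ) t = D t v := fun v t => rfl
  -- the key quadratic estimate
  have key : ∀ z, dist z z₀ < R / 2 → z ∈ O ∧
      ‖Fl z - Fl z₀ - L (z - z₀)‖ ≤ (4 * C + 3) / R ^ 2 * ‖z - z₀‖ ^ 2 := by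
    intro z hz
    have hzO : z ∈ O := hball (mem_ball.2 (lt_trans hz (by linarith)))
    refine ⟨hzO, ?_⟩
    rcases eq_or_ne z z₀ with rfl | hne
    · simp
    set v : Fin d → ℂ := z - z₀ with hvdef
    have hv : v ≠ 0 := sub_ne_zero.2 hne
    have hv' : 0 < ‖v‖ := norm_pos_iff.2 hv
    set ρ : ℝ := R / ‖v‖ with hρdef
    have hρ0 : 0 < ρ := by positivity
    have hρ2 : 2 < ρ := by
      rw [hρdef, lt_div_iff₀ hv']
      have : ‖v‖ < R / 2 := by
        rw [hvdef, ← dist_eq_norm]; exact hz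
      linarith
    -- coordinatewise estimate
    have core : ∀ t : Ω, ‖f z t - f z₀ t - D t v‖ ≤ (4 * C + 3) / R ^ 2 * ‖v‖ ^ 2 := by
      intro t
      set g : ℂ → ℂ := fun ζ => f (z₀ + ζ • v) t - f z₀ t - ζ * D t v with hgdef
      have hg0 : g 0 = 0 := by simp [hgdef]
      have hgd : DifferentiableOn ℂ g (ball 0 ρ) := by
        intro ζ hζ
        apply DifferentiableWithinAt.sub
        · apply DifferentiableWithinAt.sub
          · exact ((hdiff t _ (hmem v hv ζ hζ)).comp ζ
              (haff v ζ).differentiableAt).differentiableWithinAt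
          · exact differentiableWithinAt_const _
        · exact (differentiableAt_id.mul_const _).differentiableWithinAt
      have hgderiv : deriv g 0 = 0 := by
        have h2 : HasDerivAt g (D t v - D t v) 0 :=
          ((hψ0 v t).sub_const (f z₀ t)).sub (hasDerivAt_mul_const (D t v))
        simpa using h2.deriv
      have hgb : ∀ ζ ∈ ball (0 : ℂ) ρ, ‖g ζ‖ ≤ 4 * C + 1 := by
        intro ζ hζ
        have hζρ : ‖ζ‖ ≤ ρ := le_of_lt (mem_ball_zero_iff.1 hζ)
        have h0m : z₀ + (0 : ℂ) • v ∈ O := by simpa using hz₀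
        have hbd1 : ‖f (z₀ + ζ • v) t - f z₀ t‖ ≤ C + C :=
          le_trans (norm_sub_le _ _) (add_le_add (hbdd _ (hmem v hv ζ hζ) t) (hbdd _ hz₀ t))
        have hbd2 : ‖ζ * D t v‖ ≤ 2 * C + 1 := by
          rw [norm_mul]
          calc ‖ζ‖ * ‖D t v‖ ≤ ρ * ((2 * C + 1) / R * ‖v‖) := by
                exact mul_le_mul hζρ (Dbound t v) (norm_nonneg _) hρ0.le
            _ = 2 * C + 1 := by
                rw [hρdef]; field_simp
        calc ‖g ζ‖ ≤ ‖f (z₀ + ζ • v) t - f z₀ t‖ + ‖ζ * D t v‖ := norm_sub_le _ _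
          _ ≤ (C + C) + (2 * C + 1) := add_le_add hbd1 hbd2
          _ = 4 * C + 1 := by ring
      have maps_g : MapsTo g (ball 0 ρ) (ball (g 0) (4 * C + 2)) := by
        intro ζ hζ
        rw [hg0, mem_ball, dist_zero_right]
        exact lt_of_le_of_lt (hgb ζ hζ) (by linarith)
      have h1d : DifferentiableOn ℂ (dslope g 0) (ball 0 ρ) :=
        (Complex.differentiableOn_dslope (ball_mem_nhds _ hρ0)).2 hgd
      have h10 : dslope g 0 0 = 0 := by rw [dslope_same]; exact hgderiv
      have maps_h1 : MapsTo (dslope g 0) (ball 0 ρ) (ball (dslope g 0 0) ((4 * C + 3) / ρ)) := by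
        intro ζ hζ
        rw [h10, mem_ball, dist_zero_right]
        calc ‖dslope g 0 ζ‖ ≤ (4 * C + 2) / ρ :=
              Complex.norm_dslope_le_div_of_mapsTo_ball hgd (maps_g.mono_right ball_subset_closedBall) hζ
          _ < (4 * C + 3) / ρ := by
              gcongr
              linarith
      have h2b : ‖dslope (dslope g 0) 0 1‖ ≤ ((4 * C + 3) / ρ) / ρ :=
        Complex.norm_dslope_le_div_of_mapsTo_ball h1d (maps_h1.mono_right ball_subset_closedBall)
          (mem_ball_zero_iff.2 (by rw [norm_one]; linarith))
      have e1 : dslope (dslope g 0) 0 1 = g 1 := by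
        rw [dslope_of_ne _ one_ne_zero, slope_def_field, h10]
        rw [dslope_of_ne _ one_ne_zero, slope_def_field, hg0]
        field_simp
        simp
      have e2 : g 1 = f z t - f z₀ t - D t v := by
        rw [hgdef]
        simp only [one_smul, one_mul]
        congr 2 <;> rw [hvdef] <;> ring_nf
      rw [e1, e2] at h2b
      calc ‖f z t - f z₀ t - D t v‖ ≤ ((4 * C + 3) / ρ) / ρ := h2b
        _ = (4 * C + 3) / R ^ 2 * ‖v‖ ^ 2 := by
            rw [hρdef]; field_simp
    -- assemble in lp norm
    apply lp.norm_le_of_forall_le (by positivity)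
    intro t
    have hsplit : (Fl z - Fl z₀ - L (z - z₀) : lp (fun _ : Ω => ℂ) ∞) t
        = (Fl z) t - (Fl z₀) t - D t v := rfl
    rw [hsplit, hF z hzO t, hF z₀ hz₀ t]
    exact core t
  -- conclude
  have hfd : HasFDerivAt Fl L z₀ := by
    refine .of_isLittleO ?_
    rw [Asymptotics.isLittleO_iff]
    intro c hc
    set K : ℝ := (4 * C + 3) / R ^ 2 with hK
    have hK0 : 0 < K := by positivity
    have hrad : 0 < min (R / 2) (c / K) := by positivity
    filter_upwards [Metric.ball_mem_nhds z₀ hrad] with z hz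
    rw [mem_ball] at hz
    have h1 : dist z z₀ < R / 2 := lt_of_lt_of_le hz (min_le_left _ _)
    have h2 : ‖z - z₀‖ ≤ c / K := by
      rw [← dist_eq_norm]
      exact le_of_lt (lt_of_lt_of_le hz (min_le_right _ _))
    calc ‖Fl z - Fl z₀ - L (z - z₀)‖ ≤ K * ‖z - z₀‖ ^ 2 := (key z h1).2
      _ = K * ‖z - z₀‖ * ‖z - z₀‖ := by ring
      _ ≤ K * (c / K) * ‖z - z₀‖ := by
          apply mul_le_mul_of_nonneg_right _ (norm_nonneg _)
          exact mul_le_mul_of_nonneg_left h2 hK0.le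
      _ = c * ‖z - z₀‖ := by field_simp
  exact hfd.differentiableAt.differentiableWithinAt



/-- weight of a finitely supported family of coefficients -/
noncomputable def wt {Ω : Type*} (c : Ω →₀ ℂ) : ℝ := ∑ t ∈ c.support, ‖c t‖

theorem wt_nonneg {Ω : Type*} (c : Ω →₀ ℂ) : 0 ≤ wt c :=
  Finset.sum_nonneg fun _ _ => norm_nonneg _

theorem sum_wt_eq {Ω : Type*} (c : Ω →₀ ℂ) (s : Finset Ω) (hs : c.support ⊆ s) :
    ∑ t ∈ s, ‖c t‖ = wt c :=
  (Finset.sum_subset hs fun t _ ht => by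
    rw [Finsupp.notMem_support_iff.1 ht, norm_zero]).symm

/-- evaluation of a coefficient family against an `ℓ^∞` function -/
noncomputable def ev {Ω : Type*} (c : Ω →₀ ℂ) (x : lp (fun _ : Ω => ℂ) ∞) : ℂ :=
  ∑ t ∈ c.support, c t * x t

theorem ev_eq_sum {Ω : Type*} (c : Ω →₀ ℂ) (x : lp (fun _ : Ω => ℂ) ∞) (s : Finset Ω)
    (hs : c.support ⊆ s) : ev c x = ∑ t ∈ s, c t * x t :=
  Finset.sum_subset hs fun t _ ht => by
    rw [Finsupp.notMem_support_iff.1 ht, zero_mul]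

theorem norm_ev_le {Ω : Type*} (c : Ω →₀ ℂ) (x : lp (fun _ : Ω => ℂ) ∞) :
    ‖ev c x‖ ≤ wt c * ‖x‖ := by
  calc ‖ev c x‖ ≤ ∑ t ∈ c.support, ‖c t * x t‖ := norm_sum_le _ _
    _ ≤ ∑ t ∈ c.support, ‖c t‖ * ‖x‖ := by
        apply Finset.sum_le_sum
        intro t _
        rw [norm_mul]
        exact mul_le_mul_of_nonneg_left
          (lp.norm_apply_le_norm (by norm_num) x t) (norm_nonneg _)
    _ = wt c * ‖x‖ := by rw [wt, Finset.sum_mul]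

theorem ev_sub {Ω : Type*} (c : Ω →₀ ℂ) (x y : lp (fun _ : Ω => ℂ) ∞) :
    ev c x - ev c y = ev c (x - y) := by
  rw [ev, ev, ev, ← Finset.sum_sub_distrib]
  apply Finset.sum_congr rfl
  intro t _
  have : (x - y : lp (fun _ : Ω => ℂ) ∞) t = x t - y t := rfl
  rw [this, mul_sub]

theorem ev_smul {Ω : Type*} (σ : ℂ) (c : Ω →₀ ℂ) (x : lp (fun _ : Ω => ℂ) ∞) :
    ev (σ • c) x = σ * ev c x := by
  rw [ev_eq_sum (σ • c) x c.support (Finsupp.support_smul), ev, Finset.mul_sum]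
  apply Finset.sum_congr rfl
  intro t _
  rw [Finsupp.smul_apply, smul_eq_mul, mul_assoc]

theorem wt_smul_le {Ω : Type*} (σ : ℂ) (c : Ω →₀ ℂ) : wt (σ • c) ≤ ‖σ‖ * wt c := by
  rw [← sum_wt_eq (σ • c) c.support (Finsupp.support_smul), wt, Finset.mul_sum]
  apply Finset.sum_le_sum
  intro t _
  rw [Finsupp.smul_apply, smul_eq_mul, norm_mul]

/-- The key approximation lemma: a continuous functional on `ℓ^∞` can be approximated,
with norm control, by finite linear combinations of point evaluations, on any finite
family of vectors. -/
theorem dirac_approx {Ω : Type*} (ρ : lp (fun _ : Ω => ℂ) ∞ →L[ℂ] ℂ)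
    {m : ℕ} (x : Fin m → lp (fun _ : Ω => ℂ) ∞) {ε : ℝ} (hε : 0 < ε) :
    ∃ c : Ω →₀ ℂ, wt c ≤ ‖ρ‖ ∧ ∀ k, ‖ev c (x k) - ρ (x k)‖ ≤ ε := by
  classical
  by_contra hcon
  push_neg at hcon
  set r : ℝ := ‖ρ‖ with hr
  have hr0 : 0 ≤ r := norm_nonneg _
  set A : Set (Fin m → ℂ) := {q | ∃ c : Ω →₀ ℂ, wt c ≤ r ∧ q = fun k => ev c (x k)} with hA
  set p : Fin m → ℂ := fun k => ρ (x k) with hp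
  -- p is not in the closure of A
  have hpA : p ∉ closure A := by
    intro hmem
    obtain ⟨q, hqA, hqd⟩ := Metric.mem_closure_iff.1 hmem ε hε
    obtain ⟨c, hcw, rfl⟩ := hqA
    obtain ⟨k, hk⟩ := hcon c hcw
    have h1 : ‖ev c (x k) - ρ (x k)‖ ≤ dist p (fun k => ev c (x k)) := by
      have : ev c (x k) - ρ (x k) = -((p - fun k => ev c (x k)) k) := by
        simp [hp]
      rw [this, norm_neg, dist_eq_norm]
      exact norm_le_pi_norm _ k
    exact absurd (lt_of_le_of_lt h1 hqd) (not_lt.2 hk.le)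
  -- A is convex
  have hconv : Convex ℝ A := by
    rintro q ⟨c, hc, rfl⟩ q' ⟨c', hc', rfl⟩ a b ha hb hab
    refine ⟨a • c + b • c', ?_, ?_⟩
    · have hsub : (a • c + b • c').support ⊆ c.support ∪ c'.support :=
        Finsupp.support_add.trans
          (Finset.union_subset_union Finsupp.support_smul Finsupp.support_smul)
      have h1 : wt (a • c + b • c') ≤ ∑ t ∈ c.support ∪ c'.support, ‖(a • c + b • c') t‖ := by
        rw [← sum_wt_eq _ _ hsub]
      have h2 : ∀ t ∈ c.support ∪ c'.support,
          ‖(a • c + b • c') t‖ ≤ a * ‖c t‖ + b * ‖c' t‖ := by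
        intro t _
        calc ‖(a • c + b • c') t‖ = ‖a • c t + b • c' t‖ := by
              rw [Finsupp.add_apply, Finsupp.smul_apply, Finsupp.smul_apply]
          _ ≤ ‖a • c t‖ + ‖b • c' t‖ := norm_add_le _ _
          _ = a * ‖c t‖ + b * ‖c' t‖ := by
              rw [norm_smul, norm_smul, Real.norm_eq_abs, Real.norm_eq_abs,
                abs_of_nonneg ha, abs_of_nonneg hb]
      calc wt (a • c + b • c') ≤ ∑ t ∈ c.support ∪ c'.support, ‖(a • c + b • c') t‖ := h1
        _ ≤ ∑ t ∈ c.support ∪ c'.support, (a * ‖c t‖ + b * ‖c' t‖) := Finset.sum_le_sum h2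
        _ = a * (∑ t ∈ c.support ∪ c'.support, ‖c t‖)
            + b * (∑ t ∈ c.support ∪ c'.support, ‖c' t‖) := by
            rw [Finset.sum_add_distrib, Finset.mul_sum, Finset.mul_sum]
        _ = a * wt c + b * wt c' := by
            rw [sum_wt_eq c _ Finset.subset_union_left,
              sum_wt_eq c' _ Finset.subset_union_right]
        _ ≤ a * r + b * r := by
            apply add_le_add
            · exact mul_le_mul_of_nonneg_left hc ha
            · exact mul_le_mul_of_nonneg_left hc' hb
        _ = r := by rw [← add_mul, hab, one_mul]
    · funext k
      have e1 : ev (a • c + b • c') (x k)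
          = ∑ t ∈ c.support ∪ c'.support, (a • c + b • c') t * (x k) t :=
        ev_eq_sum _ _ _ (Finsupp.support_add.trans
          (Finset.union_subset_union Finsupp.support_smul Finsupp.support_smul))
      have e2 : ∀ t, (a • c + b • c') t * (x k) t
          = a • (c t * (x k) t) + b • (c' t * (x k) t) := by
        intro t
        rw [Finsupp.add_apply, Finsupp.smul_apply, Finsupp.smul_apply, add_mul,
          smul_mul_assoc, smul_mul_assoc]
      rw [Pi.add_apply, Pi.smul_apply, Pi.smul_apply, e1]
      simp only [e2]
      rw [Finset.sum_add_distrib, ← Finset.smul_sum, ← Finset.smul_sum]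
      congr 1
      · rw [ev_eq_sum c (x k) _ Finset.subset_union_left]
      · rw [ev_eq_sum c' (x k) _ Finset.subset_union_right]
  -- separate
  obtain ⟨fL, u, hAu, hup⟩ :=
    geometric_hahn_banach_closed_point (hconv.closure) isClosed_closure hpA
  have h0A : (0 : Fin m → ℂ) ∈ A := by
    refine ⟨0, by simp [wt, hr0], ?_⟩
    funext k
    simp [ev]
  have hu0 : 0 < u := by
    have := hAu 0 (subset_closure h0A)
    simpa using this
  set w : (Fin m → ℂ) →L[ℂ] ℂ := fL.extendTo𝕜' with hw
  have hwre : ∀ y : Fin m → ℂ, (w y).re = fL y := by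
    intro y
    exact fL.toLinearMap.extendTo𝕜'_apply_re (𝕜 := ℂ) y
  -- the norm bound on w over A
  have hwbound : ∀ c : Ω →₀ ℂ, wt c ≤ r → ‖w (fun k => ev c (x k))‖ ≤ u := by
    intro c hc
    by_cases hz : w (fun k => ev c (x k)) = 0
    · rw [hz, norm_zero]; exact hu0.le
    set σ : ℂ := (‖w (fun k => ev c (x k))‖ : ℂ) / w (fun k => ev c (x k)) with hσ
    have hσn : ‖σ‖ = 1 := by
      rw [hσ, norm_div, Complex.norm_real, Real.norm_eq_abs, abs_norm, div_self]
      rwa [norm_ne_zero_iff]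
    have hσm : σ * w (fun k => ev c (x k)) = (‖w (fun k => ev c (x k))‖ : ℂ) :=
      div_mul_cancel₀ _ hz
    have hmemA : (fun k => ev (σ • c) (x k)) ∈ A := by
      refine ⟨σ • c, ?_, rfl⟩
      calc wt (σ • c) ≤ ‖σ‖ * wt c := wt_smul_le σ c
        _ = wt c := by rw [hσn, one_mul]
        _ ≤ r := hc
    have hTσ : (fun k => ev (σ • c) (x k)) = σ • fun k => ev c (x k) := by
      funext k
      rw [Pi.smul_apply, ev_smul, smul_eq_mul]
    have hre : (‖w (fun k => ev c (x k))‖ : ℝ) = fL (fun k => ev (σ • c) (x k)) := by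
      rw [← hwre]
      rw [hTσ, map_smul, smul_eq_mul, hσm]
      exact (Complex.ofReal_re _).symm
    rw [hre]
    exact (hAu _ (subset_closure hmemA)).le
  -- w as a sum of coordinates
  set dv : Fin m → ℂ := fun k => w (Pi.single k 1) with hdv
  have hwy : ∀ y : Fin m → ℂ, w y = ∑ k, y k * dv k := by
    intro y
    have hy : y = ∑ k, y k • (Pi.single k (1 : ℂ) : Fin m → ℂ) := by
      funext j
      rw [Finset.sum_apply]
      simp [Pi.single_apply, eq_comm]
    conv_lhs => rw [hy]
    rw [map_sum]
    apply Finset.sum_congr rfl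
    intro k _
    rw [map_smul, smul_eq_mul]
  -- the lp element
  set xs : lp (fun _ : Ω => ℂ) ∞ := ∑ k, dv k • x k with hxs
  have hxst : ∀ t : Ω, (xs : ∀ _ : Ω, ℂ) t = w (fun k => (x k) t) := by
    intro t
    have h1 : (xs : ∀ _ : Ω, ℂ) t = ∑ k, dv k * (x k) t := by
      rw [hxs]
      rw [lp.coeFn_sum]
      rw [Finset.sum_apply]
      apply Finset.sum_congr rfl
      intro k _
      rw [lp.coeFn_smul, Pi.smul_apply, smul_eq_mul]
    rw [h1, hwy]
    apply Finset.sum_congr rfl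
    intro k _
    ring
  have hdirac : ∀ t : Ω, r * ‖(xs : ∀ _ : Ω, ℂ) t‖ ≤ u := by
    intro t
    rcases eq_or_lt_of_le hr0 with h0 | hrpos
    · rw [← h0, zero_mul]; exact hu0.le
    set c : Ω →₀ ℂ := Finsupp.single t (r : ℂ) with hc
    have hrne : (r : ℂ) ≠ 0 := by
      simpa using ne_of_gt hrpos
    have hsupp : c.support = {t} := Finsupp.support_single_ne_zero t hrne
    have hwt : wt c ≤ r := by
      rw [wt, hsupp, Finset.sum_singleton, hc, Finsupp.single_eq_same, Complex.norm_real,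
        Real.norm_eq_abs, abs_of_pos hrpos]
    have hevc : ∀ k, ev c (x k) = (r : ℂ) * (x k) t := by
      intro k
      rw [ev, hsupp, Finset.sum_singleton, hc, Finsupp.single_eq_same]
    have h1 := hwbound c hwt
    have h2 : (fun k => ev c (x k)) = (r : ℂ) • fun k => (x k) t := by
      funext k
      rw [Pi.smul_apply, hevc, smul_eq_mul]
    rw [h2, map_smul, smul_eq_mul, norm_mul, Complex.norm_real, Real.norm_eq_abs,
      abs_of_pos hrpos, ← hxst] at h1
    exact h1
  have hxsnorm : r * ‖xs‖ ≤ u := by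
    rcases eq_or_lt_of_le hr0 with h0 | hrpos
    · rw [← h0, zero_mul]; exact hu0.le
    have h1 : ‖xs‖ ≤ u / r := by
      apply lp.norm_le_of_forall_le (div_nonneg hu0.le hrpos.le)
      intro t
      rw [le_div_iff₀ hrpos]
      calc ‖(xs : ∀ _ : Ω, ℂ) t‖ * r = r * ‖(xs : ∀ _ : Ω, ℂ) t‖ := mul_comm _ _
        _ ≤ u := hdirac t
    calc r * ‖xs‖ ≤ r * (u / r) := mul_le_mul_of_nonneg_left h1 hrpos.le
      _ = u := by field_simp
  have hwp : w p = ρ xs := by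
    rw [hwy, hxs, map_sum]
    apply Finset.sum_congr rfl
    intro k _
    rw [map_smul, smul_eq_mul, hp]
    ring
  have hfinal : fL p ≤ u := by
    calc fL p = (w p).re := (hwre p).symm
      _ ≤ ‖w p‖ := Complex.re_le_norm _
      _ = ‖ρ xs‖ := by rw [hwp]
      _ ≤ ‖ρ‖ * ‖xs‖ := ρ.le_opNorm xs
      _ ≤ u := hxsnorm
  exact absurd hup (not_lt.2 hfinal)



/-- The master Fubini identity for functionals on the full `ℓ^∞` space. -/
theorem master {d : ℕ} {O : Set (Fin d → ℂ)} (hO : IsOpen O) (hOne : O.Nonempty)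
    {Ω : Type*} (f : (Fin d → ℂ) → Ω → ℂ) {C : ℝ} (hC : 0 ≤ C)
    (hbdd : ∀ z ∈ O, ∀ t, ‖f z t‖ ≤ C)
    (Fl : (Fin d → ℂ) → lp (fun _ : Ω => ℂ) ∞)
    (hF : ∀ z ∈ O, ∀ t, (Fl z : ∀ _ : Ω, ℂ) t = f z t)
    (hFb : ∀ z ∈ O, ‖Fl z‖ ≤ C)
    (hholo : ∀ t, DifferentiableOn ℂ (fun z => f z t) O)
    (φ : ((Fin d → ℂ) → ℂ) →ₗ[ℂ] ℂ) (hφ : BPContinuous O φ)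
    (G : lp (fun _ : Ω => ℂ) ∞) (hG : ∀ t, (G : ∀ _ : Ω, ℂ) t = φ (fun z => f z t))
    (ρ : lp (fun _ : Ω => ℂ) ∞ →L[ℂ] ℂ) :
    ρ G = φ (fun z => ρ (Fl z)) := by
  classical
  have hFld : DifferentiableOn ℂ Fl O := Fl_differentiableOn hO f hC hbdd Fl hF hholo
  have hFlcont : ContinuousOn Fl O := hFld.continuousOn
  have : Nonempty O := hOne.to_subtype
  obtain ⟨e, he⟩ := TopologicalSpace.exists_dense_seq O
  set x : ℕ → lp (fun _ : Ω => ℂ) ∞ := fun k => Nat.casesOn k G (fun j => Fl (e j)) with hx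
  have hx0 : x 0 = G := rfl
  have hxs : ∀ j : ℕ, x (j + 1) = Fl (e j) := fun j => rfl
  -- approximate ρ by dirac combinations
  have happrox : ∀ n : ℕ, ∃ c : Ω →₀ ℂ, wt c ≤ ‖ρ‖ ∧
      ∀ k : Fin (n + 1), ‖ev c (x k) - ρ (x k)‖ ≤ 1 / (n + 1) := by
    intro n
    exact dirac_approx ρ (fun k : Fin (n + 1) => x k) (by positivity)
  choose c hcw hca using happrox
  -- the sequence of holomorphic functions
  set g : ℕ → (Fin d → ℂ) → ℂ := fun n z => ∑ t ∈ (c n).support, c n t * f z t with hg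
  have hgev : ∀ n, ∀ z ∈ O, g n z = ev (c n) (Fl z) := by
    intro n z hz
    rw [hg, ev]
    apply Finset.sum_congr rfl
    intro t _
    rw [hF z hz t]
  have hgd : ∀ n, DifferentiableOn ℂ (g n) O := by
    intro n
    apply DifferentiableOn.fun_sum
    intro t _
    exact (differentiableOn_const _).mul (hholo t)
  have hg0d : DifferentiableOn ℂ (fun z => ρ (Fl z)) O :=
    (ρ.differentiable.comp_differentiableOn hFld)
  have hgb : ∀ n, ∀ z ∈ O, ‖g n z‖ ≤ ‖ρ‖ * C := by
    intro n z hz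
    rw [hgev n z hz]
    calc ‖ev (c n) (Fl z)‖ ≤ wt (c n) * ‖Fl z‖ := norm_ev_le _ _
      _ ≤ ‖ρ‖ * C := by
          apply mul_le_mul (hcw n) (hFb z hz) (norm_nonneg _) (norm_nonneg _)
  have hg0b : ∀ z ∈ O, ‖ρ (Fl z)‖ ≤ ‖ρ‖ * C := by
    intro z hz
    calc ‖ρ (Fl z)‖ ≤ ‖ρ‖ * ‖Fl z‖ := ρ.le_opNorm _
      _ ≤ ‖ρ‖ * C := mul_le_mul_of_nonneg_left (hFb z hz) (norm_nonneg _)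
  -- pointwise convergence
  have hptwise : ∀ z ∈ O, Tendsto (fun n => g n z) atTop (nhds (ρ (Fl z))) := by
    intro z hz
    rw [Metric.tendsto_atTop]
    intro ε hε
    set δ : ℝ := ε / (3 * (‖ρ‖ + 1)) with hδ
    have hδ0 : 0 < δ := by positivity
    -- find a nearby point of the dense sequence
    have hcont := hFlcont z hz
    rw [Metric.continuousWithinAt_iff] at hcont
    obtain ⟨δ₀, hδ₀, hnear⟩ := hcont δ hδ0
    obtain ⟨k, hk⟩ := he.exists_dist_lt (⟨z, hz⟩ : O) hδ₀
    have hek : dist ((e k : O) : Fin d → ℂ) z < δ₀ := by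
      simpa [Subtype.dist_eq, dist_comm] using hk
    have hflk : dist (Fl (e k)) (Fl z) < δ := hnear (e k).2 hek
    obtain ⟨N₂, hN₂⟩ := exists_nat_one_div_lt (show (0:ℝ) < ε / 3 by positivity)
    refine ⟨max (k + 1) N₂, ?_⟩
    intro n hn
    have hkn : k + 1 < n + 1 + 1 := by
      have := le_of_max_le_left hn
      omega
    have hnN₂ : (N₂ : ℝ) ≤ n := by
      exact_mod_cast le_of_max_le_right hn
    -- three-term estimate
    have hterm2 := hca n ⟨k + 1, by omega⟩
    have hxk : x ((⟨k + 1, by omega⟩ : Fin (n + 1)) : ℕ) = Fl (e k) := rfl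
    rw [hxk] at hterm2
    have h1 : ‖ev (c n) (Fl z) - ev (c n) (Fl (e k))‖ ≤ ‖ρ‖ * δ := by
      rw [ev_sub]
      calc ‖ev (c n) (Fl z - Fl (e k))‖ ≤ wt (c n) * ‖Fl z - Fl (e k)‖ := norm_ev_le _ _
        _ ≤ ‖ρ‖ * δ := by
            apply mul_le_mul (hcw n) _ (norm_nonneg _) (norm_nonneg _)
            rw [← dist_eq_norm, dist_comm]
            exact hflk.le
    have h3 : ‖ρ (Fl (e k)) - ρ (Fl z)‖ ≤ ‖ρ‖ * δ := by
      rw [← map_sub]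
      calc ‖ρ (Fl (e k) - Fl z)‖ ≤ ‖ρ‖ * ‖Fl (e k) - Fl z‖ := ρ.le_opNorm _
        _ ≤ ‖ρ‖ * δ := by
            apply mul_le_mul_of_nonneg_left _ (norm_nonneg _)
            rw [← dist_eq_norm]
            exact hflk.le
    have hρδ : ‖ρ‖ * δ ≤ ε / 3 := by
      have hfr : ‖ρ‖ / (‖ρ‖ + 1) ≤ 1 := by
        rw [div_le_one (by positivity)]; linarith [norm_nonneg ρ]
      have hne : (‖ρ‖ + 1) ≠ 0 := by positivity
      calc ‖ρ‖ * δ = (‖ρ‖ * ε) / (3 * (‖ρ‖ + 1)) := by rw [hδ, mul_div_assoc']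
        _ = (‖ρ‖ * ε) / ((‖ρ‖ + 1) * 3) := by rw [mul_comm (3:ℝ) (‖ρ‖+1)]
        _ = (‖ρ‖ / (‖ρ‖ + 1)) * (ε / 3) := (div_mul_div_comm _ _ _ _).symm
        _ ≤ 1 * (ε / 3) := mul_le_mul_of_nonneg_right hfr (by positivity)
        _ = ε / 3 := one_mul _
    have h2' : ‖ev (c n) (Fl (e k)) - ρ (Fl (e k))‖ < ε / 3 := by
      calc ‖ev (c n) (Fl (e k)) - ρ (Fl (e k))‖ ≤ 1 / (n + 1) := hterm2
        _ ≤ 1 / (N₂ + 1) := by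
            apply one_div_le_one_div_of_le (by positivity)
            linarith
        _ < ε / 3 := hN₂
    rw [dist_eq_norm, hgev n z hz]
    calc ‖ev (c n) (Fl z) - ρ (Fl z)‖
        ≤ ‖ev (c n) (Fl z) - ev (c n) (Fl (e k))‖
          + ‖ev (c n) (Fl (e k)) - ρ (Fl (e k))‖
          + ‖ρ (Fl (e k)) - ρ (Fl z)‖ := by
          simpa [dist_eq_norm] using dist_triangle4 (ev (c n) (Fl z)) (ev (c n) (Fl (e k)))
            (ρ (Fl (e k))) (ρ (Fl z))
      _ < ε := by
          have e1 := h1.trans hρδ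
          have e3 := h3.trans hρδ
          linarith
  -- apply bp-continuity
  have htend := hφ g (fun z => ρ (Fl z)) hgd hg0d ⟨‖ρ‖ * C, hgb⟩ ⟨‖ρ‖ * C, hg0b⟩ hptwise
  -- compute φ (g n)
  have hφg : ∀ n, φ (g n) = ev (c n) G := by
    intro n
    have hsum : g n = ∑ t ∈ (c n).support, (c n t) • (fun z => f z t) := by
      funext z
      rw [hg, Finset.sum_apply]
      apply Finset.sum_congr rfl
      intro t _
      rw [Pi.smul_apply, smul_eq_mul]
    rw [hsum, map_sum, ev]
    apply Finset.sum_congr rfl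
    intro t _
    rw [map_smul, smul_eq_mul, hG t]
  have htendG : Tendsto (fun n => φ (g n)) atTop (nhds (ρ G)) := by
    have hsq : ∀ n : ℕ, ‖φ (g n) - ρ G‖ ≤ 1 / (n + 1) := by
      intro n
      rw [hφg n]
      have := hca n ⟨0, Nat.succ_pos n⟩
      have hx0' : x ((⟨0, Nat.succ_pos n⟩ : Fin (n + 1)) : ℕ) = G := rfl
      rwa [hx0'] at this
    have h0 : Tendsto (fun n => φ (g n) - ρ G) atTop (nhds 0) := by
      apply squeeze_zero_norm hsq
      exact tendsto_one_div_add_atTop_nhds_zero_nat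
    have := h0.add_const (ρ G)
    simpa using this
  exact (tendsto_nhds_unique htendG htend)

end AbstractFubiniAux

open AbstractFubiniAux Metric Set

/-- **(Fubini-type theorem in closed subspaces of `ℓ^∞(Ω)`.)** Let `Ω` be a set, `E` a
closed subspace of `ℓ^∞(Ω)`, `O ⊆ ℂᵈ` open, `f : O × Ω → ℂ` bounded with `f(z,·) ∈ E`
(witnessed by `F`) and `f(·,t)` holomorphic, and `φ` a bp-continuous linear functional on
`H^∞(O)`. Then `t ↦ φ(f(·,t))` belongs to the closed linear span of `{f(z,·) : z ∈ O}`
in `E`, and for every `μ ∈ E'` one has `μ(t ↦ φ(f(·,t))) = φ(z ↦ μ(f(z,·)))`. -/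
theorem abstract_fubini_closed_subspace_ellinfty
    {d : ℕ} (O : Set (Fin d → ℂ)) (hO : IsOpen O)
    {Ω : Type*} (E : Submodule ℂ (lp (fun _ : Ω => ℂ) ∞))
    (hE : IsClosed (E : Set (lp (fun _ : Ω => ℂ) ∞)))
    (f : (Fin d → ℂ) → Ω → ℂ)
    (hbdd : ∃ C : ℝ, ∀ z ∈ O, ∀ t, ‖f z t‖ ≤ C)
    (F : (Fin d → ℂ) → E)
    (hF : ∀ z ∈ O, ∀ t : Ω, (E.subtype (F z) : ∀ _ : Ω, ℂ) t = f z t)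
    (hholo : ∀ t : Ω, DifferentiableOn ℂ (fun z => f z t) O)
    (φ : ((Fin d → ℂ) → ℂ) →ₗ[ℂ] ℂ) (hφ : BPContinuous O φ) :
    ∃ G : E, (∀ t : Ω, (E.subtype G : ∀ _ : Ω, ℂ) t = φ (fun z => f z t)) ∧
      G ∈ closure (Submodule.span ℂ (F '' O) : Set E) ∧
      ∀ μ : E →L[ℂ] ℂ, μ G = φ (fun z => μ (F z)) := by

  classical
  rcases O.eq_empty_or_nonempty with hOe | hOne
  · -- degenerate case : `O` is empty, so `φ = 0`
    have hvac : ∀ g : (Fin d → ℂ) → ℂ, DifferentiableOn ℂ g O := by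
      intro g z hz
      rw [hOe] at hz
      exact absurd hz (notMem_empty z)
    have hvacb : ∀ g : (Fin d → ℂ) → ℂ, ∃ C, ∀ z ∈ O, ‖g z‖ ≤ C := by
      intro g
      refine ⟨0, fun z hz => ?_⟩
      rw [hOe] at hz
      exact absurd hz (notMem_empty z)
    have hzero : ∀ g : (Fin d → ℂ) → ℂ, φ g = 0 := by
      intro g
      have h : φ g = φ 0 := by
        apply phi_congr hφ (hvac g) (hvac 0) (hvacb g) (hvacb 0)
        intro z hz
        rw [hOe] at hz
        exact absurd hz (notMem_empty z)
      rw [h, map_zero]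
    refine ⟨0, ?_, ?_, ?_⟩
    · intro t
      rw [hzero]
      simp
    · exact subset_closure (Submodule.span ℂ (F '' O)).zero_mem
    · intro μ
      rw [hzero, map_zero]
  · obtain ⟨C₀, hC₀⟩ := hbdd
    set C : ℝ := max C₀ 0 with hCdef
    have hC : 0 ≤ C := le_max_right _ _
    have hbddC : ∀ z ∈ O, ∀ t, ‖f z t‖ ≤ C :=
      fun z hz t => (hC₀ z hz t).trans (le_max_left _ _)
    set Fl : (Fin d → ℂ) → lp (fun _ : Ω => ℂ) ∞ := fun z => E.subtype (F z) with hFldef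
    have hFl : ∀ z ∈ O, ∀ t, (Fl z : ∀ _ : Ω, ℂ) t = f z t := hF
    have hFb : ∀ z ∈ O, ‖Fl z‖ ≤ C := by
      intro z hz
      apply lp.norm_le_of_forall_le hC
      intro t
      rw [hFl z hz t]
      exact hbddC z hz t
    obtain ⟨M, hM0, hM⟩ := phi_bound hφ
    have hmemG : Memℓp (fun t => φ (fun z => f z t)) ∞ := by
      apply memℓp_infty
      refine ⟨M * C, ?_⟩
      rintro y ⟨t, rfl⟩
      exact hM _ (hholo t) C hC (fun z hz => hbddC z hz t)
    set G₀ : lp (fun _ : Ω => ℂ) ∞ := ⟨fun t => φ (fun z => f z t), hmemG⟩ with hG₀def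
    have hG₀t : ∀ t, (G₀ : ∀ _ : Ω, ℂ) t = φ (fun z => f z t) := fun t => rfl
    have hmaster : ∀ ρ : lp (fun _ : Ω => ℂ) ∞ →L[ℂ] ℂ, ρ G₀ = φ (fun z => ρ (Fl z)) :=
      fun ρ => master hO hOne f hC hbddC Fl hFl hFb hholo φ hφ G₀ hG₀t ρ
    set V : Submodule ℂ (lp (fun _ : Ω => ℂ) ∞) := Submodule.span ℂ (Fl '' O) with hVdef
    -- closure membership at the level of `ℓ^∞`
    have hGcl : G₀ ∈ closure (V : Set (lp (fun _ : Ω => ℂ) ∞)) := by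
      by_contra hnG
      have hconv : Convex ℝ (V : Set (lp (fun _ : Ω => ℂ) ∞)) := by
        have := (V.restrictScalars ℝ).convex
        simpa using this
      obtain ⟨fL, u, hGu, hVu⟩ :=
        geometric_hahn_banach_point_closed hconv.closure isClosed_closure hnG
      have hu0 : u < 0 := by
        have := hVu 0 (subset_closure V.zero_mem)
        simpa using this
      have hfV : ∀ y ∈ V, fL y = 0 := by
        intro y hy
        by_contra hne
        have ha : ∀ a : ℝ, u < a * fL y := by
          intro a
          have hmem : a • y ∈ V := (V.restrictScalars ℝ).smul_mem a hy
          have := hVu (a • y) (subset_closure hmem)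
          rwa [map_smul, smul_eq_mul] at this
        have h1 := ha ((u - 1) / fL y)
        rw [div_mul_cancel₀ _ hne] at h1
        linarith
      set w : lp (fun _ : Ω => ℂ) ∞ →L[ℂ] ℂ := fL.extendTo𝕜' with hw
      have hwV : ∀ y ∈ V, w y = 0 := by
        intro y hy
        rw [hw, ContinuousLinearMap.extendTo𝕜', ContinuousLinearMap.extendTo𝕜'_apply]
        rw [hfV y hy, hfV _ (V.smul_mem (RCLike.I (K := ℂ)) hy)]
        simp
      have hwFl : ∀ z ∈ O, w (Fl z) = 0 :=
        fun z hz => hwV _ (Submodule.subset_span ⟨z, hz, rfl⟩)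
      have h1 : w G₀ = φ (fun z => w (Fl z)) := hmaster w
      have h2 : φ (fun z => w (Fl z)) = 0 := by
        have hd : DifferentiableOn ℂ (fun z => w (Fl z)) O :=
          (differentiableOn_const 0).congr (fun z hz => hwFl z hz)
        have h3 : φ (fun z => w (Fl z)) = φ 0 := by
          apply phi_congr hφ hd (differentiableOn_const 0)
            ⟨0, fun z hz => by rw [hwFl z hz]; simp⟩ ⟨0, fun z hz => by simp⟩
          intro z hz
          simp [hwFl z hz]
        rw [h3, map_zero]
      have hre : (w G₀).re = fL G₀ := fL.toLinearMap.extendTo𝕜'_apply_re (𝕜 := ℂ) G₀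
      have : (w G₀).re < 0 := by
        rw [hre]
        linarith
      rw [h1.trans h2] at this
      simp at this
    have hGE : G₀ ∈ E := by
      have hVE : (V : Set (lp (fun _ : Ω => ℂ) ∞)) ⊆ (E : Set (lp (fun _ : Ω => ℂ) ∞)) := by
        rw [hVdef]
        apply Submodule.span_le.2
        rintro y ⟨z, hz, rfl⟩
        exact (F z).2
      exact closure_minimal hVE hE hGcl
    refine ⟨⟨G₀, hGE⟩, ?_, ?_, ?_⟩
    · intro t
      exact hG₀t t
    · rw [closure_subtype]
      have himg : ((↑) '' ((Submodule.span ℂ (F '' O) : Submodule ℂ E) : Set E)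
          : Set (lp (fun _ : Ω => ℂ) ∞)) = (V : Set (lp (fun _ : Ω => ℂ) ∞)) := by
        have h1 : ((↑) '' ((Submodule.span ℂ (F '' O) : Submodule ℂ E) : Set E)
            : Set (lp (fun _ : Ω => ℂ) ∞))
            = ((Submodule.span ℂ (F '' O)).map E.subtype : Set (lp (fun _ : Ω => ℂ) ∞)) := rfl
        rw [h1, Submodule.map_span, hVdef]
        congr 1
        rw [← Set.image_comp]
        rfl
      rw [himg]
      exact hGcl
    · intro μ
      obtain ⟨ρ, hρext, -⟩ := exists_extension_norm_eq E μ
      have h1 : μ (⟨G₀, hGE⟩ : E) = ρ G₀ := (hρext ⟨G₀, hGE⟩).symm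
      rw [h1, hmaster ρ]
      congr 1
      funext z
      exact hρext (F z)
end
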